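/- arXiv:1609.09493 — 3 statements merged into one kernel-verified Lean document; each statement's English description precedes it below -/
import Mathlib

section
/- Block-skew-symmetric pencils in 𝕄₁(P) with vanishing first ansatz component are zero: let P(λ) be a regular or singular matrix polynomial of degree k ≥ 2 and let ℒ(λ) ∈ 𝕄₁(P) be block-skew-symmetric (ℒ(λ) = −ℒ(λ)^𝓑) with ansatz vector v = [0, v₂, v₃, …, v_k]^T ∈ ℝ^k (first component zero). Then ℒ(λ) is identically zero. -/
open Polynomial Matrix

noncomputable section

/-- `Φ_k(λ) ⊗ I_n` as a `kn × n` polynomial matrix: its `i`-th block row (0-based)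
is `φ_{k-1-i}(λ) I_n`. -/
def PhiMat (n k : ℕ) (φ : ℕ → Polynomial ℝ) :
    Matrix (Fin k × Fin n) (Fin n) (Polynomial ℝ) :=
  Matrix.of fun p s => if p.2 = s then φ (k - 1 - p.1.val) else 0

/-- The matrix polynomial `P(λ) = Σ_{i=0}^k P_i φ_i(λ)`. -/
def matP (n k : ℕ) (φ : ℕ → Polynomial ℝ) (Pm : ℕ → Matrix (Fin n) (Fin n) ℝ) :
    Matrix (Fin n) (Fin n) (Polynomial ℝ) :=
  Matrix.of fun r s => ∑ i ∈ Finset.range (k + 1), C (Pm i r s) * φ i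

/-- `v ⊗ Q` as a `kn × n` polynomial matrix. -/
def vKron (n k : ℕ) (v : Fin k → ℝ) (Q : Matrix (Fin n) (Fin n) (Polynomial ℝ)) :
    Matrix (Fin k × Fin n) (Fin n) (Polynomial ℝ) :=
  Matrix.of fun p s => C (v p.1) * Q p.2 s

/-- `v^T ⊗ Q` as an `n × kn` polynomial matrix. -/
def vKronRow (n k : ℕ) (v : Fin k → ℝ) (Q : Matrix (Fin n) (Fin n) (Polynomial ℝ)) :
    Matrix (Fin n) (Fin k × Fin n) (Polynomial ℝ) :=
  Matrix.of fun s q => C (v q.1) * Q s q.2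

/-- A matrix pencil: a matrix polynomial each of whose entries has degree at most `1`. -/
def IsPencil {m m' : Type*} (L : Matrix m m' (Polynomial ℝ)) : Prop :=
  ∀ p q, (L p q).degree ≤ 1

/-- `ℒ(λ) ∈ 𝕄₁(P)` with ansatz vector `v`, i.e. `ℒ(λ)(Φ_k(λ) ⊗ I_n) = v ⊗ P(λ)`. -/
def Ansatz1 (n k : ℕ) (φ : ℕ → Polynomial ℝ) (Pm : ℕ → Matrix (Fin n) (Fin n) ℝ)
    (L : Matrix (Fin k × Fin n) (Fin k × Fin n) (Polynomial ℝ)) (v : Fin k → ℝ) : Prop :=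
  L * PhiMat n k φ = vKron n k v (matP n k φ Pm)

/-- `ℒ(λ) ∈ 𝕄₂(P)` with ansatz vector `w`, i.e. `(Φ_k(λ)^T ⊗ I_n) ℒ(λ) = w^T ⊗ P(λ)`. -/
def Ansatz2 (n k : ℕ) (φ : ℕ → Polynomial ℝ) (Pm : ℕ → Matrix (Fin n) (Fin n) ℝ)
    (L : Matrix (Fin k × Fin n) (Fin k × Fin n) (Polynomial ℝ)) (w : Fin k → ℝ) : Prop :=
  (PhiMat n k φ)ᵀ * L = vKronRow n k w (matP n k φ Pm)

/-- The anchor pencil `F_Φ^P(λ) = [m_Φ^P(λ); M_Φ(λ)]`. -/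
def FPhi (n k : ℕ) (a b c : ℕ → ℝ) (Pm : ℕ → Matrix (Fin n) (Fin n) ℝ) :
    Matrix (Fin k × Fin n) (Fin k × Fin n) (Polynomial ℝ) :=
  Matrix.of fun p q =>
    if p.1.val = 0 then
      -- the block row m_Φ^P(λ)
      if q.1.val = 0 then
        C ((a (k - 1))⁻¹) * (X - C (b (k - 1))) * C (Pm k p.2 q.2) + C (Pm (k - 1) p.2 q.2)
      else if q.1.val = 1 then
        C (Pm (k - 2) p.2 q.2) - C (c (k - 1) / a (k - 1)) * C (Pm k p.2 q.2)
      else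
        C (Pm (k - 1 - q.1.val) p.2 q.2)
    else
      -- the block rows M_Φ(λ) = M_Φ^⋆(λ) ⊗ I_n
      (if q.1.val + 1 = p.1.val then -C (a (k - 1 - p.1.val))
       else if q.1.val = p.1.val then X - C (b (k - 1 - p.1.val))
       else if q.1.val = p.1.val + 1 then -C (c (k - 1 - p.1.val))
       else 0) * (if p.2 = q.2 then 1 else 0)

/-- The `kn × kn` real matrix `[v ⊗ I_n, B]`: first `n` columns form `v ⊗ I_n`,
the remaining `(k-1)n` columns form `B`. -/
def extCols (n k : ℕ) (v : Fin k → ℝ)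
    (B : Matrix (Fin k × Fin n) (Fin (k - 1) × Fin n) ℝ) :
    Matrix (Fin k × Fin n) (Fin k × Fin n) ℝ :=
  Matrix.of fun p q =>
    if h : q.1.val = 0 then (if p.2 = q.2 then v p.1 else 0)
    else B p (⟨q.1.val - 1, by have := q.1.isLt; omega⟩, q.2)

/-- The `kn × kn` real matrix `[w^T ⊗ I_n; B]`: first `n` rows form `w^T ⊗ I_n`,
the remaining `(k-1)n` rows form `B`. -/
def extRows (n k : ℕ) (w : Fin k → ℝ)
    (B : Matrix (Fin (k - 1) × Fin n) (Fin k × Fin n) ℝ) :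
    Matrix (Fin k × Fin n) (Fin k × Fin n) ℝ :=
  Matrix.of fun p q =>
    if h : p.1.val = 0 then (if p.2 = q.2 then w q.1 else 0)
    else B (⟨p.1.val - 1, by have := p.1.isLt; omega⟩, p.2) q

/-- A real matrix viewed as a constant matrix polynomial. -/
def liftC {m m' : Type*} (A : Matrix m m' ℝ) : Matrix m m' (Polynomial ℝ) :=
  A.map C

/-- Block transpose of a matrix consisting of `n × n` blocks: block `(i,j)` of `A^𝓑`
is block `(j,i)` of `A`. -/
def blockTr {n k1 k2 : ℕ} {R : Type*} (A : Matrix (Fin k1 × Fin n) (Fin k2 × Fin n) R) :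
    Matrix (Fin k2 × Fin n) (Fin k1 × Fin n) R :=
  Matrix.of fun p q => A (q.1, p.2) (p.1, q.2)

/-- `rev_d Q(λ) = λ^d Q(1/λ)`, entrywise reversal of a matrix polynomial of degree at most `d`. -/
def revMat {m m' : Type*} (d : ℕ) (L : Matrix m m' (Polynomial ℝ)) :
    Matrix m m' (Polynomial ℝ) :=
  Matrix.of fun p q => (L p q).reflect d

/-- Evaluation of a real matrix polynomial at a complex number. -/
def evalC {m m' : Type*} (α : ℂ) (L : Matrix m m' (Polynomial ℝ)) : Matrix m m' ℂ :=
  Matrix.of fun p q => aeval α (L p q)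

/-- A matrix polynomial viewed as a matrix over the field `ℝ(λ)` of rational functions. -/
def liftRat {m m' : Type*} (L : Matrix m m' (Polynomial ℝ)) : Matrix m m' (RatFunc ℝ) :=
  L.map (algebraMap (Polynomial ℝ) (RatFunc ℝ))

/-- `v ⊗ I_n` as a `kn × n` complex matrix. -/
def vKronC (n k : ℕ) (v : Fin k → ℝ) : Matrix (Fin k × Fin n) (Fin n) ℂ :=
  Matrix.of fun p s => if p.2 = s then (v p.1 : ℂ) else 0

/-- `v ⊗ I_n` as a `kn × n` matrix over `ℝ(λ)`. -/
def vKronRat (n k : ℕ) (v : Fin k → ℝ) : Matrix (Fin k × Fin n) (Fin n) (RatFunc ℝ) :=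
  Matrix.of fun p s => if p.2 = s then RatFunc.C (v p.1) else 0

/-- The pencil `Xm λ + Ym` as a matrix polynomial. -/
def pencilPoly {m : Type*} (Xm Ym : Matrix m m ℝ) : Matrix m m (Polynomial ℝ) :=
  Matrix.of fun p q => C (Xm p q) * X + C (Ym p q)

/-- `diag(P(λ), I_{(k-1)n})` as a `kn × kn` matrix polynomial. -/
def diagPI (n k : ℕ) (Pp : Matrix (Fin n) (Fin n) (Polynomial ℝ)) :
    Matrix (Fin k × Fin n) (Fin k × Fin n) (Polynomial ℝ) :=
  Matrix.of fun p q =>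
    if p.1.val = 0 ∧ q.1.val = 0 then Pp p.2 q.2 else if p = q then 1 else 0

/-- `ℒ(λ)` is a linearization of `P(λ)`: there are `U(λ), V(λ)` with nonzero real constant
determinants such that `U(λ)ℒ(λ)V(λ) = diag(P(λ), I_{(k-1)n})`. -/
def IsLinearization (n k : ℕ)
    (L : Matrix (Fin k × Fin n) (Fin k × Fin n) (Polynomial ℝ))
    (Pp : Matrix (Fin n) (Fin n) (Polynomial ℝ)) : Prop :=
  ∃ U V : Matrix (Fin k × Fin n) (Fin k × Fin n) (Polynomial ℝ),
    (∃ cu : ℝ, cu ≠ 0 ∧ U.det = C cu) ∧ (∃ cv : ℝ, cv ≠ 0 ∧ V.det = C cv) ∧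
    U * L * V = diagPI n k Pp

/-- `ℒ(λ)` is a strong linearization of `P(λ)` (of degree `k`): it is a linearization and
`rev₁ ℒ(λ)` is a linearization of `rev_k P(λ)`. -/
def IsStrongLin (n k : ℕ)
    (L : Matrix (Fin k × Fin n) (Fin k × Fin n) (Polynomial ℝ))
    (Pp : Matrix (Fin n) (Fin n) (Polynomial ℝ)) : Prop :=
  IsLinearization n k L Pp ∧ IsLinearization n k (revMat 1 L) (revMat k Pp)

section AuxiliaryLemmas

variable (a b c : ℕ → ℝ) (φ : ℕ → Polynomial ℝ)

private lemma phi_deg (ha : ∀ j, a j ≠ 0) (hφ0 : φ 0 = 1)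
    (hφ1 : C (a 0) * φ 1 = (X - C (b 0)) * φ 0)
    (hφrec : ∀ j, C (a (j + 1)) * φ (j + 2) =
      (X - C (b (j + 1))) * φ (j + 1) - C (c (j + 1)) * φ j) :
    ∀ m, (φ m).natDegree = m ∧ φ m ≠ 0 := by
  have key : ∀ m, (φ m).natDegree = m ∧ φ m ≠ 0 ∧ (φ (m+1)).natDegree = m + 1 ∧ φ (m+1) ≠ 0 := by
    intro m
    induction m with
    | zero =>
      have h1 : C (a 0) * φ 1 = X - C (b 0) := by rw [hφ1, hφ0, mul_one]
      have hd : (C (a 0) * φ 1).natDegree = 1 := by rw [h1]; exact natDegree_X_sub_C _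
      rw [natDegree_C_mul (ha 0)] at hd
      refine ⟨by simp [hφ0], by simp [hφ0], hd, ?_⟩
      intro h; rw [h, natDegree_zero] at hd; omega
    | succ m ih =>
      obtain ⟨hdm, hnm, hdm1, hnm1⟩ := ih
      refine ⟨hdm1, hnm1, ?_, ?_⟩
      · have hmono : (X - C (b (m+1))).Monic := monic_X_sub_C _
        have hq : ((X - C (b (m+1))) * φ (m+1)).natDegree = m + 2 := by
          rw [hmono.natDegree_mul' (by simpa using hnm1), natDegree_X_sub_C, hdm1]
          omega
        have hlt : (C (c (m+1)) * φ m).natDegree < ((X - C (b (m+1))) * φ (m+1)).natDegree := by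
          rw [hq]
          calc (C (c (m+1)) * φ m).natDegree ≤ (φ m).natDegree := natDegree_C_mul_le _ _
            _ = m := hdm
            _ < m + 2 := by omega
        have hsub : ((X - C (b (m+1))) * φ (m+1) - C (c (m+1)) * φ m).natDegree = m + 2 :=
          (natDegree_sub_eq_left_of_natDegree_lt hlt).trans hq
        rw [← hφrec m, natDegree_C_mul (ha (m+1))] at hsub
        exact hsub
      · intro h
        have hrec := hφrec m
        rw [h, mul_zero] at hrec
        have hlt : (C (c (m+1)) * φ m).natDegree < ((X - C (b (m+1))) * φ (m+1)).natDegree := by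
          rw [(monic_X_sub_C _).natDegree_mul' (by simpa using hnm1), natDegree_X_sub_C, hdm1]
          calc (C (c (m+1)) * φ m).natDegree ≤ (φ m).natDegree := natDegree_C_mul_le _ _
            _ = m := hdm
            _ < 1 + (m+1) := by omega
        have hne : (X - C (b (m+1))) * φ (m+1) - C (c (m+1)) * φ m ≠ 0 := by
          intro h0
          have hd0 := natDegree_sub_eq_left_of_natDegree_lt hlt
          rw [h0, natDegree_zero, (monic_X_sub_C _).natDegree_mul' (by simpa using hnm1),
            natDegree_X_sub_C, hdm1] at hd0
          omega
        exact hne hrec.symm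
  intro m; exact ⟨(key m).1, (key m).2.1⟩

private lemma phi_linind (ha : ∀ j, a j ≠ 0) (hφ0 : φ 0 = 1)
    (hφ1 : C (a 0) * φ 1 = (X - C (b 0)) * φ 0)
    (hφrec : ∀ j, C (a (j + 1)) * φ (j + 2) =
      (X - C (b (j + 1))) * φ (j + 1) - C (c (j + 1)) * φ j) :
    ∀ (N : ℕ) (r : ℕ → ℝ),
    (∑ m ∈ Finset.range N, C (r m) * φ m) = 0 → ∀ m < N, r m = 0 := by
  intro N
  induction N with
  | zero => intro r _ m hm; omega
  | succ N ih =>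
    intro r hsum m hm
    have hdeg := phi_deg a b c φ ha hφ0 hφ1 hφrec
    have hrN : r N = 0 := by
      have hc := congrArg (fun p => p.coeff N) hsum
      simp only [Finset.sum_range_succ] at hc
      have h1 : (∑ m ∈ Finset.range N, C (r m) * φ m).coeff N = 0 := by
        rw [finset_sum_coeff]
        apply Finset.sum_eq_zero
        intro x hx
        rw [coeff_C_mul]
        rw [coeff_eq_zero_of_natDegree_lt (by rw [(hdeg x).1]; exact Finset.mem_range.mp hx)]
        ring
      rw [coeff_add, h1, zero_add, coeff_C_mul] at hc
      have hne : (φ N).coeff N ≠ 0 := by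
        have h2 := leadingCoeff_ne_zero.mpr (hdeg N).2
        rwa [leadingCoeff, (hdeg N).1] at h2
      simpa [coeff_zero] using (mul_eq_zero.mp hc).resolve_right hne
    rcases Nat.lt_succ_iff_lt_or_eq.mp hm with h | h
    · apply ih r _ m h
      rw [Finset.sum_range_succ, hrN] at hsum
      simpa using hsum
    · rw [h]; exact hrN

private lemma xphi (hφ0 : φ 0 = 1)
    (hφ1 : C (a 0) * φ 1 = (X - C (b 0)) * φ 0)
    (hφrec : ∀ j, C (a (j + 1)) * φ (j + 2) =
      (X - C (b (j + 1))) * φ (j + 1) - C (c (j + 1)) * φ j) :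
    ∀ m, X * φ m = C (a m) * φ (m+1) + C (b m) * φ m
    + (if m = 0 then 0 else C (c m) * φ (m-1)) := by
  intro m
  cases m with
  | zero =>
    rw [if_pos rfl, add_zero, hφ1]
    ring
  | succ m =>
    rw [if_neg (Nat.succ_ne_zero m), Nat.add_sub_cancel]
    linear_combination -hφrec m

private lemma kernel_skew (ha : ∀ j, a j ≠ 0) (hφ0 : φ 0 = 1)
    (hφ1 : C (a 0) * φ 1 = (X - C (b 0)) * φ 0)
    (hφrec : ∀ j, C (a (j + 1)) * φ (j + 2) =
      (X - C (b (j + 1))) * φ (j + 1) - C (c (j + 1)) * φ j)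
    (k : ℕ) (hk : 2 ≤ k)
    (β α : ℕ → ℕ → ℝ)
    (hβout : ∀ i j, k ≤ i ∨ k ≤ j → β i j = 0)
    (hαout : ∀ i j, k ≤ i ∨ k ≤ j → α i j = 0)
    (hβskew : ∀ i j, β j i = -β i j)
    (hαskew : ∀ i j, α j i = -α i j)
    (heq : ∀ i, i < k →
      ∑ j ∈ Finset.range k, (C (β i j) * X + C (α i j)) * φ (k-1-j) = 0) :
    ∀ i j, β i j = 0 ∧ α i j = 0 := by
  classical
  set Bf : ℕ → ℕ → ℝ := fun i m => if m < k then β i (k-1-m) else 0 with hBf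
  set Af : ℕ → ℕ → ℝ := fun i m => if m < k then α i (k-1-m) else 0 with hAf
  -- coefficient equations
  have hE : ∀ i, i < k → ∀ m, m < k + 1 →
      (if m = 0 then 0 else a (m-1) * Bf i (m-1)) + (b m * Bf i m + Af i m)
        + c (m+1) * Bf i (m+1) = 0 := by
    intro i hi
    apply phi_linind a b c φ ha hφ0 hφ1 hφrec (k+1)
    -- step 1: reflected sum
    have h1 : ∑ m ∈ Finset.range k, (C (Bf i m) * X + C (Af i m)) * φ m = 0 := by
      rw [← Finset.sum_range_reflect (fun m => (C (Bf i m) * X + C (Af i m)) * φ m) k]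
      rw [← heq i hi]
      apply Finset.sum_congr rfl
      intro j hj
      have hj' : j < k := Finset.mem_range.mp hj
      have e0 : k - 1 - j < k := by omega
      have e1 : k - 1 - (k - 1 - j) = j := by omega
      simp only [hBf, hAf, if_pos e0, e1]
    -- step 2: expand with the recurrence
    have h2 : ∑ m ∈ Finset.range k, (C (Bf i m * a m) * φ (m+1)
        + C (Bf i m * b m + Af i m) * φ m
        + (if m = 0 then 0 else C (Bf i m * c m) * φ (m-1))) = 0 := by
      refine Eq.trans (Finset.sum_congr rfl fun m _ => ?_) h1
      have hx : (C (Bf i m) * X + C (Af i m)) * φ m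
          = C (Bf i m) * (X * φ m) + C (Af i m) * φ m := by ring
      rw [hx, xphi a b c φ hφ0 hφ1 hφrec m]
      split_ifs with hm
      · simp only [C_add, C_mul]; ring
      · simp only [C_add, C_mul]; ring
    -- step 3: reassemble the target sum
    rw [show (fun m => C ((if m = 0 then 0 else a (m-1) * Bf i (m-1)) + (b m * Bf i m + Af i m)
        + c (m+1) * Bf i (m+1)) * φ m)
      = (fun m => C (if m = 0 then 0 else a (m-1) * Bf i (m-1)) * φ m
        + C (b m * Bf i m + Af i m) * φ m + C (c (m+1) * Bf i (m+1)) * φ m) from by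
        funext m; simp only [C_add]; ring]
    rw [Finset.sum_add_distrib, Finset.sum_add_distrib]
    rw [show ∑ m ∈ Finset.range (k+1), C (if m = 0 then 0 else a (m-1) * Bf i (m-1)) * φ m
        = ∑ m ∈ Finset.range k, C (Bf i m * a m) * φ (m+1) from by
      rw [Finset.sum_range_succ']
      rw [if_pos rfl, C_0, zero_mul, add_zero]
      refine Finset.sum_congr rfl fun m _ => ?_
      rw [if_neg (Nat.succ_ne_zero m), Nat.add_sub_cancel, mul_comm (a m)]]
    rw [show ∑ m ∈ Finset.range (k+1), C (b m * Bf i m + Af i m) * φ m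
        = ∑ m ∈ Finset.range k, C (Bf i m * b m + Af i m) * φ m from by
      rw [Finset.sum_range_succ]
      have hb : Bf i k = 0 := by simp [hBf]
      have hab : Af i k = 0 := by simp [hAf]
      rw [hb, hab, mul_zero, add_zero, C_0, zero_mul, add_zero]
      refine Finset.sum_congr rfl fun m _ => ?_
      rw [mul_comm (b m)]]
    rw [show ∑ m ∈ Finset.range (k+1), C (c (m+1) * Bf i (m+1)) * φ m
        = ∑ m ∈ Finset.range k, (if m = 0 then 0 else C (Bf i m * c m) * φ (m-1)) from by
      obtain ⟨k', rfl⟩ : ∃ k', k = k' + 2 := ⟨k - 2, by omega⟩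
      rw [show k' + 2 + 1 = (k' + 1) + 1 + 1 from rfl]
      rw [Finset.sum_range_succ, Finset.sum_range_succ]
      have hz1 : Bf i (k' + 1 + 1) = 0 := by simp [hBf]
      have hz2 : Bf i (k' + 2 + 1) = 0 := by simp [hBf]
      rw [hz1, hz2, mul_zero, mul_zero, C_0, zero_mul, zero_mul, add_zero, add_zero]
      rw [Finset.sum_range_succ' (fun m => if m = 0 then 0
        else C (Bf i m * c m) * φ (m-1)) (k'+1)]
      rw [if_pos rfl, add_zero]
      refine Finset.sum_congr rfl fun m _ => ?_
      rw [if_neg (Nat.succ_ne_zero m), Nat.add_sub_cancel, mul_comm (c (m+1))]]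
    rw [← Finset.sum_add_distrib, ← Finset.sum_add_distrib]
    exact h2
  -- base: first column vanishes
  have hbase : ∀ i, i < k → β i 0 = 0 := by
    intro i hi
    have h := hE i hi k (by omega)
    have e1 : Bf i k = 0 := by simp [hBf]
    have e2 : Af i k = 0 := by simp [hAf]
    have e3 : Bf i (k+1) = 0 := by simp [hBf]
    have e4 : Bf i (k-1) = β i 0 := by
      simp only [hBf]
      rw [if_pos (by omega)]
      congr 1
      omega
    rw [e1, e2, e3, e4, if_neg (by omega)] at h
    simp only [mul_zero, add_zero, zero_add] at h
    exact (mul_eq_zero.mp h).resolve_left (ha (k-1))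
  -- relation for the constant coefficients
  have hrel : ∀ i j, i < k → j < k →
      α i j = -((if j + 1 < k then a (k-2-j) * β i (j+1) else 0) + b (k-1-j) * β i j
        + (if 1 ≤ j then c (k-j) * β i (j-1) else 0)) := by
    intro i j hi hj
    have h := hE i hi (k-1-j) (by omega)
    have e2 : Bf i (k-1-j) = β i j := by
      simp only [hBf]; rw [if_pos (by omega)]; congr 1; omega
    have e3 : Af i (k-1-j) = α i j := by
      simp only [hAf]; rw [if_pos (by omega)]; congr 1; omega
    have e1 : (if k-1-j = 0 then (0:ℝ) else a (k-1-j-1) * Bf i (k-1-j-1))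
        = (if j + 1 < k then a (k-2-j) * β i (j+1) else 0) := by
      by_cases hj1 : j + 1 < k
      · rw [if_neg (by omega), if_pos hj1]
        have hBv : Bf i (k-1-j-1) = β i (j+1) := by
          simp only [hBf]; rw [if_pos (by omega)]; congr 1; omega
        rw [hBv]
        congr 2
        omega
      · rw [if_pos (by omega), if_neg hj1]
    have e4 : c (k-1-j+1) * Bf i (k-1-j+1)
        = (if 1 ≤ j then c (k-j) * β i (j-1) else 0) := by
      by_cases hj1 : 1 ≤ j
      · rw [if_pos hj1]
        have hBv : Bf i (k-1-j+1) = β i (j-1) := by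
          simp only [hBf]; rw [if_pos (by omega)]; congr 1; omega
        rw [hBv]
        congr 2
        omega
      · rw [if_neg hj1]
        have hBv : Bf i (k-1-j+1) = 0 := by
          simp only [hBf]; rw [if_neg (by omega)]
        rw [hBv, mul_zero]
    rw [e1, e2, e3, e4] at h
    linarith [h]
  -- induction: β = 0
  have hβ : ∀ i j, β i j = 0 := by
    intro i
    induction i using Nat.strong_induction_on with
    | _ i IH =>
      intro j
      match i with
      | 0 =>
        by_cases hj : j < k
        · rw [hβskew j 0, hbase j hj, neg_zero]
        · exact hβout _ _ (Or.inr (by omega))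
      | (i' + 1) =>
        by_cases hik : i' + 1 < k
        · by_cases hjk : j < k
          · have hi' : i' < k := by omega
            have IH' : ∀ j, β i' j = 0 := IH i' (Nat.lt_succ_self i')
            have hαij : α i' j = 0 := by
              rw [hrel i' j hi' hjk]
              simp [IH']
            have hαji : α j i' = 0 := by rw [hαskew i' j, hαij, neg_zero]
            have h := hrel j i' hjk hi'
            rw [hαji, if_pos hik] at h
            have h2 : β j i' = 0 := by rw [hβskew i' j, IH', neg_zero]
            have h3 : (if 1 ≤ i' then c (k-i') * β j (i'-1) else 0) = 0 := by
              split
              · rw [hβskew (i'-1) j, IH (i'-1) (by omega) j, neg_zero, mul_zero]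
              · rfl
            rw [h2, h3] at h
            simp only [mul_zero, add_zero, zero_add] at h
            have h4 : a (k-2-i') * β j (i'+1) = 0 := by linarith
            have h5 : β j (i'+1) = 0 := (mul_eq_zero.mp h4).resolve_left (ha _)
            rw [hβskew j (i'+1), h5, neg_zero]
          · exact hβout _ _ (Or.inr (by omega))
        · exact hβout _ _ (Or.inl (by omega))
  refine fun i j => ⟨hβ i j, ?_⟩
  by_cases hi : i < k
  · by_cases hj : j < k
    · rw [hrel i j hi hj]; simp [hβ]
    · exact hαout _ _ (Or.inr (by omega))
  · exact hαout _ _ (Or.inl (by omega))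

end AuxiliaryLemmas

theorem statement_12
    (n k : ℕ) (hn : 0 < n) (hk : 2 ≤ k)
    (a b c : ℕ → ℝ) (ha : ∀ j, a j ≠ 0)
    (φ : ℕ → Polynomial ℝ) (hφ0 : φ 0 = 1)
    (hφ1 : C (a 0) * φ 1 = (X - C (b 0)) * φ 0)
    (hφrec : ∀ j, C (a (j + 1)) * φ (j + 2) =
      (X - C (b (j + 1))) * φ (j + 1) - C (c (j + 1)) * φ j)
    (Pm : ℕ → Matrix (Fin n) (Fin n) ℝ) (hPk : Pm k ≠ 0)
    (L : Matrix (Fin k × Fin n) (Fin k × Fin n) (Polynomial ℝ)) (hL : IsPencil L) (v : Fin k → ℝ) (hv : Ansatz1 n k φ Pm L v)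
    (hskew : blockTr L = -L) (hv1 : v ⟨0, by omega⟩ = 0) :
    L = 0 := by
  classical
  -- row equations from the ansatz
  have rowEq : ∀ (i : Fin k) (s t : Fin n),
      ∑ j : Fin k, L (i, s) (j, t) * φ (k - 1 - j.val)
        = C (v i) * (∑ m ∈ Finset.range (k+1), C (Pm m s t) * φ m) := by
    intro i s t
    have h := congrFun (congrFun hv (i, s)) t
    simp only [Matrix.mul_apply, PhiMat, vKron, matP, Matrix.of_apply] at h
    rw [← h, Fintype.sum_prod_type]
    refine Finset.sum_congr rfl fun j _ => ?_
    simp [mul_ite, mul_zero, Finset.sum_ite_eq']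
  -- entrywise block skew-symmetry
  have hskew' : ∀ (i j : Fin k) (s' t' : Fin n), L (j, s') (i, t') = - L (i, s') (j, t') := by
    intro i j s' t'
    have h := congrFun (congrFun hskew (i, s')) (j, t')
    simpa [blockTr, Matrix.neg_apply] using h
  -- Step A : the ansatz vector vanishes
  have hv0 : ∀ i, v i = 0 := by
    obtain ⟨t, s, hPts⟩ : ∃ t s, Pm k t s ≠ 0 := by
      by_contra hcon
      push_neg at hcon
      exact hPk (by ext t s; simpa using hcon t s)
    have hPne : (∑ m ∈ Finset.range (k+1), C (Pm m t s) * φ m) ≠ 0 := by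
      intro h0
      exact hPts (phi_linind a b c φ ha hφ0 hφ1 hφrec (k+1) _ h0 k (by omega))
    have hQ1 : ∑ i : Fin k, φ (k-1-i.val) * (∑ j : Fin k, L (i,t) (j,s) * φ (k-1-j.val))
        = (∑ i : Fin k, C (v i) * φ (k-1-i.val))
          * (∑ m ∈ Finset.range (k+1), C (Pm m t s) * φ m) := by
      rw [Finset.sum_mul]
      refine Finset.sum_congr rfl fun i _ => ?_
      rw [rowEq i t s]; ring
    have hQ2 : ∑ i : Fin k, φ (k-1-i.val) * (∑ j : Fin k, L (i,t) (j,s) * φ (k-1-j.val)) = 0 := by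
      set S := ∑ i : Fin k, φ (k-1-i.val) * (∑ j : Fin k, L (i,t) (j,s) * φ (k-1-j.val)) with hS
      have hSS : S + S = 0 := by
        have hcalc : S = -S := by
          calc S = ∑ i : Fin k, ∑ j : Fin k,
                φ (k-1-i.val) * (L (i,t) (j,s) * φ (k-1-j.val)) := by
                rw [hS]
                refine Finset.sum_congr rfl fun i _ => ?_
                rw [Finset.mul_sum]
            _ = ∑ i : Fin k, ∑ j : Fin k,
                -(φ (k-1-j.val) * (L (j,t) (i,s) * φ (k-1-i.val))) := by
                refine Finset.sum_congr rfl fun i _ => Finset.sum_congr rfl fun j _ => ?_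
                rw [hskew' j i t s]; ring
            _ = -∑ i : Fin k, ∑ j : Fin k,
                (φ (k-1-j.val) * (L (j,t) (i,s) * φ (k-1-i.val))) := by
                simp [Finset.sum_neg_distrib]
            _ = -∑ j : Fin k, ∑ i : Fin k,
                (φ (k-1-j.val) * (L (j,t) (i,s) * φ (k-1-i.val))) := by
                rw [Finset.sum_comm]
            _ = -S := by
                rw [hS]
                simp_rw [Finset.mul_sum]
        linear_combination hcalc
      have h2 : (2 : Polynomial ℝ) * S = 0 := by linear_combination hSS
      exact (mul_eq_zero.mp h2).resolve_left two_ne_zero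
    have hgz : (∑ i : Fin k, C (v i) * φ (k-1-i.val)) = 0 :=
      (mul_eq_zero.mp (hQ1.symm.trans hQ2)).resolve_right hPne
    set r : ℕ → ℝ := fun m => if h : m < k then v ⟨m, h⟩ else 0 with hr
    have hg1 : ∑ m ∈ Finset.range k, C (r m) * φ (k-1-m) = 0 := by
      rw [← Fin.sum_univ_eq_sum_range (fun m => C (r m) * φ (k-1-m)) k]
      rw [← hgz]
      refine Finset.sum_congr rfl fun i _ => ?_
      simp [hr, i.isLt]
    have hg2 : ∑ m ∈ Finset.range k, C (r (k-1-m)) * φ m = 0 := by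
      rw [← Finset.sum_range_reflect (fun m => C (r (k-1-m)) * φ m) k]
      rw [← hg1]
      refine Finset.sum_congr rfl fun j hj => ?_
      have hj' : j < k := Finset.mem_range.mp hj
      have e1 : k-1-(k-1-j) = j := by omega
      rw [e1]
    intro i
    have hlii := phi_linind a b c φ ha hφ0 hφ1 hφrec k _ hg2 (k-1-i.val)
      (by have := i.isLt; omega)
    have e2 : k-1-(k-1-i.val) = i.val := by have := i.isLt; omega
    rw [e2] at hlii
    have e3 : r i.val = v i := by simp [hr, i.isLt]
    rw [← e3, hlii]
  -- Step B : apply the kernel lemma entrywise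
  refine Matrix.ext fun p q => ?_
  obtain ⟨i, s⟩ := p
  obtain ⟨j, t⟩ := q
  set β : ℕ → ℕ → ℝ := fun i' j' =>
    if h : i' < k ∧ j' < k then (L (⟨i', h.1⟩, s) (⟨j', h.2⟩, t)).coeff 1 else 0 with hβ
  set α : ℕ → ℕ → ℝ := fun i' j' =>
    if h : i' < k ∧ j' < k then (L (⟨i', h.1⟩, s) (⟨j', h.2⟩, t)).coeff 0 else 0 with hα
  have main : ∀ i' j', β i' j' = 0 ∧ α i' j' = 0 := by
    apply kernel_skew a b c φ ha hφ0 hφ1 hφrec k hk β α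
    · intro i' j' h
      simp only [hβ]
      rw [dif_neg (by omega)]
    · intro i' j' h
      simp only [hα]
      rw [dif_neg (by omega)]
    · intro i' j'
      by_cases h : i' < k ∧ j' < k
      · simp only [hβ]
        rw [dif_pos (And.intro h.2 h.1), dif_pos h]
        rw [hskew' ⟨i', h.1⟩ ⟨j', h.2⟩ s t, Polynomial.coeff_neg]
      · simp only [hβ]
        rw [dif_neg (by tauto), dif_neg h, neg_zero]
    · intro i' j'
      by_cases h : i' < k ∧ j' < k
      · simp only [hα]
        rw [dif_pos (And.intro h.2 h.1), dif_pos h]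
        rw [hskew' ⟨i', h.1⟩ ⟨j', h.2⟩ s t, Polynomial.coeff_neg]
      · simp only [hα]
        rw [dif_neg (by tauto), dif_neg h, neg_zero]
    · intro i' hi'
      have hre := rowEq ⟨i', hi'⟩ s t
      rw [hv0 ⟨i', hi'⟩, map_zero, zero_mul] at hre
      rw [← hre]
      rw [← Fin.sum_univ_eq_sum_range
        (fun m => (C (β i' m) * X + C (α i' m)) * φ (k-1-m)) k]
      refine Finset.sum_congr rfl fun j' _ => ?_
      congr 1
      rw [eq_X_add_C_of_degree_le_one (hL (⟨i', hi'⟩, s) (j', t))]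
      have eb : β i' j'.val = (L ((⟨i', hi'⟩ : Fin k), s) (j', t)).coeff 1 := by
        simp only [hβ]
        rw [dif_pos (And.intro hi' j'.isLt)]
      have ea : α i' j'.val = (L ((⟨i', hi'⟩ : Fin k), s) (j', t)).coeff 0 := by
        simp only [hα]
        rw [dif_pos (And.intro hi' j'.isLt)]
      rw [eb, ea]
  have h1 : (L (i, s) (j, t)).coeff 1 = 0 := by
    have hb := (main i.val j.val).1
    simp only [hβ] at hb
    rw [dif_pos (And.intro i.isLt j.isLt)] at hb
    simpa using hb
  have h0 : (L (i, s) (j, t)).coeff 0 = 0 := by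
    have hb := (main i.val j.val).2
    simp only [hα] at hb
    rw [dif_pos (And.intro i.isLt j.isLt)] at hb
    simpa using hb
  have hrw := eq_X_add_C_of_degree_le_one (hL (i, s) (j, t))
  rw [h1, h0] at hrw
  simpa using hrw
end
end

section
/- Block-symmetry of the double ansatz space: let P(λ) be a regular or singular n×n matrix polynomial of degree k ≥ 2. Then every matrix pencil ℒ(λ) ∈ 𝔻𝕄(P) := 𝕄₁(P) ∩ 𝕄₂(P) is block-symmetric, i.e., ℒ(λ) = ℒ(λ)^𝓑. -/
open Polynomial Matrix

noncomputable section

section S13auxx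
open Finset

section S13aux
variable {a b c : ℕ → ℝ} {φ : ℕ → Polynomial ℝ}

lemma s13_phi_degree (ha : ∀ j, a j ≠ 0) (hφ0 : φ 0 = 1)
    (hφ1 : C (a 0) * φ 1 = (X - C (b 0)) * φ 0)
    (hφrec : ∀ j, C (a (j + 1)) * φ (j + 2) =
      (X - C (b (j + 1))) * φ (j + 1) - C (c (j + 1)) * φ j) :
    ∀ m, (φ m).degree = m := by
  have key : ∀ m, (φ m).degree = m ∧ (φ (m+1)).degree = (m+1 : ℕ) := by
    intro m
    induction m with
    | zero =>
      constructor
      · simp [hφ0]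
      · have h1 : (C (a 0) * φ 1).degree = 1 := by
          rw [hφ1, hφ0, mul_one]; exact degree_X_sub_C _
        rwa [degree_mul, degree_C (ha 0), zero_add] at h1
    | succ m ih =>
      refine ⟨ih.2, ?_⟩
      have hdegL : ((X - C (b (m+1))) * φ (m+1)).degree = ((m+2 : ℕ) : WithBot ℕ) := by
        rw [degree_mul, degree_X_sub_C, ih.2]
        norm_cast
        omega
      have hdegR : (C (c (m+1)) * φ m).degree < ((m+2 : ℕ) : WithBot ℕ) := by
        calc (C (c (m+1)) * φ m).degree ≤ (C (c (m+1))).degree + (φ m).degree :=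
              degree_mul_le _ _
          _ ≤ 0 + (m : WithBot ℕ) := add_le_add degree_C_le (le_of_eq ih.1)
          _ = (m : WithBot ℕ) := zero_add _
          _ < ((m+2 : ℕ) : WithBot ℕ) := by exact_mod_cast (by omega : m < m + 2)
      have h2 : (C (a (m+1)) * φ (m+2)).degree = ((m+2 : ℕ) : WithBot ℕ) := by
        rw [hφrec m, degree_sub_eq_left_of_degree_lt (hdegL ▸ hdegR)]
        exact hdegL
      rwa [degree_mul, degree_C (ha (m+1)), zero_add] at h2
  exact fun m => (key m).1

lemma s13_phi_lead (hdeg : ∀ m, (φ m).degree = m) (m : ℕ) : (φ m).coeff m ≠ 0 := by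
  have h := hdeg m
  have hne : φ m ≠ 0 := fun h0 => by simp [h0] at h
  have hnd : (φ m).natDegree = m := natDegree_eq_of_degree_eq_some h
  have h2 : (φ m).coeff ((φ m).natDegree) ≠ 0 := by
    rw [coeff_natDegree]; exact leadingCoeff_ne_zero.mpr hne
  rwa [hnd] at h2

lemma s13_phi_coeff_lt (hdeg : ∀ m, (φ m).degree = m) {j m : ℕ} (h : j < m) :
    (φ j).coeff m = 0 :=
  coeff_eq_zero_of_degree_lt (by rw [hdeg]; exact_mod_cast h)

lemma s13_linind (hdeg : ∀ m, (φ m).degree = m) :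
    ∀ (N : ℕ) (u : ℕ → ℝ), (∑ j ∈ Finset.range N, C (u j) * φ j) = 0 → ∀ j < N, u j = 0 := by
  intro N
  induction N with
  | zero => intro u _ j hj; omega
  | succ N ih =>
    intro u h j hj
    have hN : u N = 0 := by
      have h0 := congrArg (fun p => Polynomial.coeff p N) h
      simp only [finset_sum_coeff, coeff_zero] at h0
      rw [Finset.sum_range_succ] at h0
      rw [Finset.sum_eq_zero (fun x hx => by
        rw [coeff_C_mul, s13_phi_coeff_lt hdeg (Finset.mem_range.mp hx), mul_zero]),
        zero_add, coeff_C_mul] at h0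
      exact (mul_eq_zero.mp h0).resolve_right (s13_phi_lead hdeg N)
    rcases Nat.lt_succ_iff_lt_or_eq.mp hj with hj' | rfl
    · refine ih u ?_ j hj'
      rw [Finset.sum_range_succ, hN] at h; simpa using h
    · exact hN

lemma s13_Xphi (hφ1 : C (a 0) * φ 1 = (X - C (b 0)) * φ 0)
    (hφrec : ∀ j, C (a (j + 1)) * φ (j + 2) =
      (X - C (b (j + 1))) * φ (j + 1) - C (c (j + 1)) * φ j) (m : ℕ) :
    X * φ m = C (a m) * φ (m+1) + C (b m) * φ m
      + (if 1 ≤ m then C (c m) * φ (m-1) else 0) := by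
  cases m with
  | zero => simp only [if_neg (by omega : ¬ 1 ≤ 0), add_zero]; linear_combination -hφ1
  | succ m =>
    simp only [if_pos (by omega : 1 ≤ m + 1), Nat.succ_sub_one]
    linear_combination -(hφrec m)

end S13aux

lemma s13_rowExpand {a b c : ℕ → ℝ} {φ : ℕ → Polynomial ℝ}
    (hdeg : ∀ m, (φ m).degree = m)
    (hX : ∀ m, X * φ m = C (a m) * φ (m+1) + C (b m) * φ m
        + (if 1 ≤ m then C (c m) * φ (m-1) else 0))
    (k : ℕ) (hk : 2 ≤ k) (A B : ℕ → ℝ)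
    (h : ∑ m ∈ Finset.range k, (C (A m) * X + C (B m)) * φ m = 0) :
    ∀ m ≤ k, (if 1 ≤ m then a (m-1) * A (m-1) else 0)
      + (if m < k then b m * A m + B m else 0)
      + (if m + 1 < k then c (m+1) * A (m+1) else 0) = 0 := by
  obtain ⟨k', rfl⟩ : ∃ k', k = k' + 2 := ⟨k - 2, by omega⟩
  set G : ℕ → ℝ := fun m => (if 1 ≤ m then a (m-1) * A (m-1) else 0)
      + (if m < k'+2 then b m * A m + B m else 0)
      + (if m + 1 < k'+2 then c (m+1) * A (m+1) else 0) with hG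
  have key : ∑ m ∈ Finset.range (k'+3), C (G m) * φ m = 0 := by
    rw [← h]
    have lhs_eq : ∑ m ∈ Finset.range (k'+3), C (G m) * φ m
        = (∑ m ∈ Finset.range (k'+2), C (a m) * C (A m) * φ (m+1))
        + (∑ m ∈ Finset.range (k'+2), (C (b m) * C (A m) + C (B m)) * φ m)
        + (∑ m ∈ Finset.range (k'+1), C (c (m+1)) * C (A (m+1)) * φ m) := by
      have split : ∀ m, C (G m) * φ m
          = (if 1 ≤ m then C (a (m-1)) * C (A (m-1)) * φ m else 0)
          + (if m < k'+2 then (C (b m) * C (A m) + C (B m)) * φ m else 0)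
          + (if m + 1 < k'+2 then C (c (m+1)) * C (A (m+1)) * φ m else 0) := by
        intro m
        simp only [hG, map_add, apply_ite C, map_zero, C_mul, add_mul, ite_mul, zero_mul]
      rw [Finset.sum_congr rfl (fun m _ => split m)]
      rw [Finset.sum_add_distrib, Finset.sum_add_distrib]
      have e1 : (∑ m ∈ Finset.range (k'+3),
          if 1 ≤ m then C (a (m-1)) * C (A (m-1)) * φ m else 0)
          = ∑ m ∈ Finset.range (k'+2), C (a m) * C (A m) * φ (m+1) := by
        rw [Finset.sum_range_succ' _ (k'+2)]
        simp only [if_neg (by omega : ¬ 1 ≤ 0), add_zero]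
        refine Finset.sum_congr rfl (fun m _ => ?_)
        rw [if_pos (by omega : 1 ≤ m + 1)]
        simp [Nat.succ_sub_one]
      have e2 : (∑ m ∈ Finset.range (k'+3),
          if m < k'+2 then (C (b m) * C (A m) + C (B m)) * φ m else 0)
          = ∑ m ∈ Finset.range (k'+2), (C (b m) * C (A m) + C (B m)) * φ m := by
        rw [Finset.sum_range_succ, if_neg (by omega : ¬ k'+2 < k'+2), add_zero]
        exact Finset.sum_congr rfl (fun m hm => if_pos (Finset.mem_range.mp hm))
      have e3 : (∑ m ∈ Finset.range (k'+3),
          if m + 1 < k'+2 then C (c (m+1)) * C (A (m+1)) * φ m else 0)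
          = ∑ m ∈ Finset.range (k'+1), C (c (m+1)) * C (A (m+1)) * φ m := by
        rw [Finset.sum_range_succ, if_neg (by omega : ¬ k'+2+1 < k'+2), add_zero,
          Finset.sum_range_succ, if_neg (by omega : ¬ k'+1+1 < k'+2), add_zero]
        exact Finset.sum_congr rfl (fun m hm =>
          if_pos (by have := Finset.mem_range.mp hm; omega))
      rw [e1, e2, e3]
    rw [lhs_eq]
    have rhs_split : ∀ m, (C (A m) * X + C (B m)) * φ m
        = C (a m) * C (A m) * φ (m+1) + (C (b m) * C (A m) + C (B m)) * φ m
          + (if 1 ≤ m then C (c m) * C (A m) * φ (m-1) else 0) := by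
      intro m
      have : (C (A m) * X + C (B m)) * φ m = C (A m) * (X * φ m) + C (B m) * φ m := by ring
      rw [this, hX m]
      split_ifs <;> ring
    rw [Finset.sum_congr rfl (fun m _ => rhs_split m), Finset.sum_add_distrib,
      Finset.sum_add_distrib]
    have e4 : (∑ m ∈ Finset.range (k'+2),
        if 1 ≤ m then C (c m) * C (A m) * φ (m-1) else 0)
        = ∑ m ∈ Finset.range (k'+1), C (c (m+1)) * C (A (m+1)) * φ m := by
      rw [Finset.sum_range_succ' _ (k'+1)]
      simp only [if_neg (by omega : ¬ 1 ≤ 0), add_zero]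
      refine Finset.sum_congr rfl (fun m _ => ?_)
      rw [if_pos (by omega : 1 ≤ m + 1)]
      simp [Nat.succ_sub_one]
    rw [e4]
  intro m hm
  exact s13_linind hdeg (k'+3) G key m (by omega)

end S13auxx

theorem statement_13
    (n k : ℕ) (hn : 0 < n) (hk : 2 ≤ k)
    (a b c : ℕ → ℝ) (ha : ∀ j, a j ≠ 0)
    (φ : ℕ → Polynomial ℝ) (hφ0 : φ 0 = 1)
    (hφ1 : C (a 0) * φ 1 = (X - C (b 0)) * φ 0)
    (hφrec : ∀ j, C (a (j + 1)) * φ (j + 2) =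
      (X - C (b (j + 1))) * φ (j + 1) - C (c (j + 1)) * φ j)
    (Pm : ℕ → Matrix (Fin n) (Fin n) ℝ) (hPk : Pm k ≠ 0)
    (L : Matrix (Fin k × Fin n) (Fin k × Fin n) (Polynomial ℝ)) (hL : IsPencil L)
    (h1 : ∃ v : Fin k → ℝ, Ansatz1 n k φ Pm L v)
    (h2 : ∃ w : Fin k → ℝ, Ansatz2 n k φ Pm L w) :
    blockTr L = L := by
    classical
  obtain ⟨v, hv⟩ := h1
  obtain ⟨w, hw⟩ := h2
  have hdeg : ∀ m, (φ m).degree = m := s13_phi_degree ha hφ0 hφ1 hφrec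
  have hX := s13_Xphi hφ1 hφrec
  -- entrywise forms of the two ansatz equations
  have hv' : ∀ (i : Fin k) (r s : Fin n),
      (∑ j : Fin k, L (i,r) (j,s) * φ (k-1-(j:ℕ))) = C (v i) * matP n k φ Pm r s := by
    intro i r s
    have h := congrFun (congrFun hv (i,r)) s
    simp only [Matrix.mul_apply, PhiMat, vKron, Matrix.of_apply, Fintype.sum_prod_type,
      mul_ite, mul_zero, Finset.sum_ite_eq', Finset.mem_univ, if_true] at h
    exact h
  have hw' : ∀ (j : Fin k) (r s : Fin n),
      (∑ i : Fin k, φ (k-1-(i:ℕ)) * L (i,r) (j,s)) = C (w j) * matP n k φ Pm r s := by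
    intro j r s
    have h := congrFun (congrFun hw r) (j,s)
    simp only [Matrix.mul_apply, Matrix.transpose_apply, PhiMat, vKronRow, Matrix.of_apply,
      Fintype.sum_prod_type, ite_mul, zero_mul, Finset.sum_ite_eq, Finset.sum_ite_eq',
      Finset.mem_univ, if_true] at h
    exact h
  -- a nonzero entry of P
  obtain ⟨r₀, s₀, hr0⟩ : ∃ r s, Pm k r s ≠ 0 := by
    by_contra hcon
    push_neg at hcon
    exact hPk (by ext r s; simpa using hcon r s)
  have hQne : matP n k φ Pm r₀ s₀ ≠ 0 := by
    intro h0
    have h1 := congrArg (fun p => Polynomial.coeff p k) h0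
    simp only [matP, Matrix.of_apply, finset_sum_coeff, coeff_C_mul, coeff_zero] at h1
    rw [Finset.sum_range_succ, Finset.sum_eq_zero (fun x hx => by
      rw [s13_phi_coeff_lt hdeg (Finset.mem_range.mp hx), mul_zero]), zero_add] at h1
    exact hr0 ((mul_eq_zero.mp h1).resolve_right (s13_phi_lead hdeg k))
  -- v = w
  have hvw : ∀ i : Fin k, v i = w i := by
    have hsum : (∑ i : Fin k, C (v i - w i) * φ (k-1-(i:ℕ))) * matP n k φ Pm r₀ s₀ = 0 := by
      have e1 : ∑ i : Fin k, φ (k-1-(i:ℕ)) * (C (v i) * matP n k φ Pm r₀ s₀)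
          = ∑ j : Fin k, (C (w j) * matP n k φ Pm r₀ s₀) * φ (k-1-(j:ℕ)) := by
        calc ∑ i : Fin k, φ (k-1-(i:ℕ)) * (C (v i) * matP n k φ Pm r₀ s₀)
            = ∑ i : Fin k, φ (k-1-(i:ℕ)) * (∑ j : Fin k, L (i,r₀) (j,s₀) * φ (k-1-(j:ℕ))) :=
              Finset.sum_congr rfl (fun i _ => by rw [hv' i r₀ s₀])
          _ = ∑ j : Fin k, (∑ i : Fin k, φ (k-1-(i:ℕ)) * L (i,r₀) (j,s₀)) * φ (k-1-(j:ℕ)) := by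
              simp only [Finset.mul_sum, Finset.sum_mul]
              rw [Finset.sum_comm]
              exact Finset.sum_congr rfl (fun j _ =>
                Finset.sum_congr rfl (fun i _ => by ring))
          _ = ∑ j : Fin k, (C (w j) * matP n k φ Pm r₀ s₀) * φ (k-1-(j:ℕ)) :=
              Finset.sum_congr rfl (fun j _ => by rw [hw' j r₀ s₀])
      calc (∑ i : Fin k, C (v i - w i) * φ (k-1-(i:ℕ))) * matP n k φ Pm r₀ s₀
          = (∑ i : Fin k, φ (k-1-(i:ℕ)) * (C (v i) * matP n k φ Pm r₀ s₀))
            - ∑ j : Fin k, (C (w j) * matP n k φ Pm r₀ s₀) * φ (k-1-(j:ℕ)) := by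
            rw [Finset.sum_mul, ← Finset.sum_sub_distrib]
            refine Finset.sum_congr rfl (fun i _ => ?_)
            rw [map_sub]; ring
        _ = 0 := by rw [e1, sub_self]
    have hzero : (∑ i : Fin k, C (v i - w i) * φ (k-1-(i:ℕ))) = 0 :=
      (mul_eq_zero.mp hsum).resolve_right hQne
    set u : ℕ → ℝ := fun i => if h : i < k then v ⟨i,h⟩ - w ⟨i,h⟩ else 0 with hu
    have hzero2 : ∑ i ∈ Finset.range k, C (u i) * φ (k-1-i) = 0 := by
      rw [← Fin.sum_univ_eq_sum_range (fun i => C (u i) * φ (k-1-i)) k, ← hzero]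
      refine Finset.sum_congr rfl (fun i _ => ?_)
      simp only [hu, dif_pos i.isLt, Fin.eta]
    have hzero3 : ∑ m ∈ Finset.range k, C (u (k-1-m)) * φ m = 0 := by
      rw [← hzero2]
      conv_rhs => rw [← Finset.sum_range_reflect (fun i => C (u i) * φ (k-1-i)) k]
      refine Finset.sum_congr rfl (fun m hm => ?_)
      rw [show k-1-(k-1-m) = m from by have := Finset.mem_range.mp hm; omega]
    intro i
    have h5 := s13_linind hdeg k (fun m => u (k-1-m)) hzero3 (k-1-(i:ℕ))
      (by have := i.isLt; omega)
    have e : k-1-(k-1-(i:ℕ)) = (i:ℕ) := by have := i.isLt; omega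
    have h5' : u (k-1-(k-1-(i:ℕ))) = 0 := h5
    rw [e] at h5'
    replace h5 := h5'
    have h6 : u i = v i - w i := by simp only [hu, dif_pos i.isLt, Fin.eta]
    rw [h6] at h5
    linarith
  -- the difference with the block transpose, entrywise
  refine Matrix.ext (fun p q => ?_)
  obtain ⟨i, r⟩ := p
  obtain ⟨j, s⟩ := q
  show L (j, r) (i, s) = L (i, r) (j, s)
  set Dm : Fin k → Fin k → Polynomial ℝ :=
    fun i' j' => L (i', r) (j', s) - L (j', r) (i', s) with hDm
  have hDdeg : ∀ i' j', (Dm i' j').degree ≤ 1 := fun i' j' =>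
    le_trans (degree_sub_le _ _) (max_le (hL _ _) (hL _ _))
  set Aq : ℕ → ℕ → ℝ := fun i' j' =>
    if h : i' < k ∧ j' < k then (Dm ⟨i',h.1⟩ ⟨j',h.2⟩).coeff 1 else 0 with hAq
  set Bq : ℕ → ℕ → ℝ := fun i' j' =>
    if h : i' < k ∧ j' < k then (Dm ⟨i',h.1⟩ ⟨j',h.2⟩).coeff 0 else 0 with hBq
  have hDrep : ∀ (i' j' : Fin k), Dm i' j' = C (Aq i' j') * X + C (Bq i' j') := by
    intro i' j'
    have h := Polynomial.eq_X_add_C_of_degree_le_one (hDdeg i' j')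
    simp only [hAq, hBq, dif_pos (And.intro i'.isLt j'.isLt), Fin.eta]
    exact h
  have hAout : ∀ i' j', k ≤ i' ∨ k ≤ j' → Aq i' j' = 0 := by
    intro i' j' h
    simp only [hAq]; exact dif_neg (by omega)
  -- row and column conditions for Dm
  have hrowF : ∀ i' : Fin k, (∑ j' : Fin k, Dm i' j' * φ (k-1-(j':ℕ))) = 0 := by
    intro i'
    have e : ∑ j' : Fin k, Dm i' j' * φ (k-1-(j':ℕ))
        = (∑ j' : Fin k, L (i', r) (j', s) * φ (k-1-(j':ℕ)))
          - ∑ j' : Fin k, φ (k-1-(j':ℕ)) * L (j', r) (i', s) := by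
      rw [← Finset.sum_sub_distrib]
      refine Finset.sum_congr rfl (fun j' _ => ?_)
      rw [hDm]; ring
    rw [e, hv' i' r s, hw' i' r s, hvw i', sub_self]
  have hcolF : ∀ j' : Fin k, (∑ i' : Fin k, φ (k-1-(i':ℕ)) * Dm i' j') = 0 := by
    intro j'
    have e : ∑ i' : Fin k, φ (k-1-(i':ℕ)) * Dm i' j'
        = (∑ i' : Fin k, φ (k-1-(i':ℕ)) * L (i', r) (j', s))
          - ∑ i' : Fin k, L (j', r) (i', s) * φ (k-1-(i':ℕ)) := by
      rw [← Finset.sum_sub_distrib]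
      refine Finset.sum_congr rfl (fun i' _ => ?_)
      rw [hDm]; ring
    rw [e, hv' j' r s, hw' j' r s, hvw j', sub_self]
  -- natural-number indexed versions
  have hrowN : ∀ i' (hi' : i' < k), ∑ m ∈ Finset.range k,
      (C (Aq i' (k-1-m)) * X + C (Bq i' (k-1-m))) * φ m = 0 := by
    intro i' hi'
    have h0 := hrowF ⟨i', hi'⟩
    have h1 : ∑ j' ∈ Finset.range k, (C (Aq i' j') * X + C (Bq i' j')) * φ (k-1-j') = 0 := by
      rw [← Fin.sum_univ_eq_sum_range
        (fun j' => (C (Aq i' j') * X + C (Bq i' j')) * φ (k-1-j')) k, ← h0]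
      exact Finset.sum_congr rfl (fun j' _ => by rw [hDrep ⟨i', hi'⟩ j'])
    rw [← h1]
    conv_rhs => rw [← Finset.sum_range_reflect
      (fun j' => (C (Aq i' j') * X + C (Bq i' j')) * φ (k-1-j')) k]
    refine Finset.sum_congr rfl (fun m hm => ?_)
    rw [show k-1-(k-1-m) = m from by have := Finset.mem_range.mp hm; omega]
  have hcolN : ∀ j' (hj' : j' < k), ∑ m ∈ Finset.range k,
      (C (Aq (k-1-m) j') * X + C (Bq (k-1-m) j')) * φ m = 0 := by
    intro j' hj'
    have h0 := hcolF ⟨j', hj'⟩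
    have h1 : ∑ i' ∈ Finset.range k, (C (Aq i' j') * X + C (Bq i' j')) * φ (k-1-i') = 0 := by
      rw [← Fin.sum_univ_eq_sum_range
        (fun i' => (C (Aq i' j') * X + C (Bq i' j')) * φ (k-1-i')) k, ← h0]
      exact Finset.sum_congr rfl (fun i' _ => by rw [hDrep i' ⟨j', hj'⟩]; ring)
    rw [← h1]
    conv_rhs => rw [← Finset.sum_range_reflect
      (fun i' => (C (Aq i' j') * X + C (Bq i' j')) * φ (k-1-i')) k]
    refine Finset.sum_congr rfl (fun m hm => ?_)
    rw [show k-1-(k-1-m) = m from by have := Finset.mem_range.mp hm; omega]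
  have hR := fun i' (hi' : i' < k) => s13_rowExpand hdeg hX k hk _ _ (hrowN i' hi')
  have hCc := fun j' (hj' : j' < k) => s13_rowExpand hdeg hX k hk _ _ (hcolN j' hj')
  -- endpoint relations
  have RowK : ∀ i' < k, Aq i' 0 = 0 := by
    intro i' hi'
    have h := hR i' hi' k le_rfl
    rw [if_pos (by omega : 1 ≤ k), if_neg (lt_irrefl k), if_neg (by omega : ¬ k+1 < k),
      show k-1-(k-1) = 0 from by omega] at h
    have h2 : a (k-1) * Aq i' 0 = 0 := by linarith
    exact (mul_eq_zero.mp h2).resolve_left (ha (k-1))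
  have ColK : ∀ j' < k, Aq 0 j' = 0 := by
    intro j' hj'
    have h := hCc j' hj' k le_rfl
    rw [if_pos (by omega : 1 ≤ k), if_neg (lt_irrefl k), if_neg (by omega : ¬ k+1 < k),
      show k-1-(k-1) = 0 from by omega] at h
    have h2 : a (k-1) * Aq 0 j' = 0 := by linarith
    exact (mul_eq_zero.mp h2).resolve_left (ha (k-1))
  -- clean row/column relations
  have RowC : ∀ i' < k, ∀ j' < k,
      (if j'+1 < k then a (k-2-j') * Aq i' (j'+1) else 0)
      + (b (k-1-j') * Aq i' j' + Bq i' j')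
      + (if 1 ≤ j' then c (k-j') * Aq i' (j'-1) else 0) = 0 := by
    intro i' hi' j' hj'
    have h := hR i' hi' (k-1-j') (by omega)
    rw [if_pos (by omega : k-1-j' < k), show k-1-(k-1-j') = j' from by omega] at h
    by_cases hj1 : j' + 1 < k
    · rw [if_pos (by omega : 1 ≤ k-1-j'), show k-1-(k-1-j'-1) = j'+1 from by omega,
        show k-1-j'-1 = k-2-j' from by omega] at h
      by_cases hj0 : 1 ≤ j'
      · rw [if_pos (by omega : k-1-j'+1 < k), show k-1-(k-1-j'+1) = j'-1 from by omega,
          show k-1-j'+1 = k-j' from by omega] at h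
        rw [if_pos hj1, if_pos hj0]
        linarith
      · rw [if_neg (by omega : ¬ k-1-j'+1 < k)] at h
        rw [if_pos hj1, if_neg hj0]
        linarith
    · rw [if_neg (by omega : ¬ 1 ≤ k-1-j'),
        if_pos (by omega : k-1-j'+1 < k), show k-1-(k-1-j'+1) = j'-1 from by omega,
        show k-1-j'+1 = k-j' from by omega] at h
      rw [if_neg hj1, if_pos (by omega : 1 ≤ j')]
      linarith
  have ColC : ∀ i' < k, ∀ j' < k,
      (if i'+1 < k then a (k-2-i') * Aq (i'+1) j' else 0)
      + (b (k-1-i') * Aq i' j' + Bq i' j')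
      + (if 1 ≤ i' then c (k-i') * Aq (i'-1) j' else 0) = 0 := by
    intro i' hi' j' hj'
    have h := hCc j' hj' (k-1-i') (by omega)
    rw [if_pos (by omega : k-1-i' < k), show k-1-(k-1-i') = i' from by omega] at h
    by_cases hj1 : i' + 1 < k
    · rw [if_pos (by omega : 1 ≤ k-1-i'), show k-1-(k-1-i'-1) = i'+1 from by omega,
        show k-1-i'-1 = k-2-i' from by omega] at h
      by_cases hj0 : 1 ≤ i'
      · rw [if_pos (by omega : k-1-i'+1 < k), show k-1-(k-1-i'+1) = i'-1 from by omega,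
          show k-1-i'+1 = k-i' from by omega] at h
        rw [if_pos hj1, if_pos hj0]
        linarith
      · rw [if_neg (by omega : ¬ k-1-i'+1 < k)] at h
        rw [if_pos hj1, if_neg hj0]
        linarith
    · rw [if_neg (by omega : ¬ 1 ≤ k-1-i'),
        if_pos (by omega : k-1-i'+1 < k), show k-1-(k-1-i'+1) = i'-1 from by omega,
        show k-1-i'+1 = k-i' from by omega] at h
      rw [if_neg hj1, if_pos (by omega : 1 ≤ i')]
      linarith
  -- the induction killing Aq
  have Avan : ∀ N i' j', (i' ≤ N ∨ j' ≤ N) → Aq i' j' = 0 := by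
    intro N
    induction N with
    | zero =>
      rintro i' j' (hi' | hj')
      · obtain rfl : i' = 0 := by omega
        by_cases hjk : j' < k
        · exact ColK j' hjk
        · exact hAout 0 j' (Or.inr (by omega))
      · obtain rfl : j' = 0 := by omega
        by_cases hik : i' < k
        · exact RowK i' hik
        · exact hAout i' 0 (Or.inl (by omega))
    | succ N ihN =>
      have step1 : ∀ j', Aq (N+1) j' = 0 := by
        intro j'
        by_cases hjN : j' ≤ N
        · exact ihN (N+1) j' (Or.inr hjN)
        by_cases hik : N+1 < k
        · by_cases hjk : j' < k
          · have hB : Bq N j' = 0 := by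
              have h := RowC N (by omega) j' hjk
              rw [ihN N j' (Or.inl le_rfl), ihN N (j'+1) (Or.inl le_rfl),
                ihN N (j'-1) (Or.inl le_rfl)] at h
              simpa using h
            have h := ColC N (by omega) j' hjk
            rw [if_pos hik, ihN N j' (Or.inl le_rfl), ihN (N-1) j' (Or.inl (by omega)),
              hB] at h
            simp only [mul_zero, add_zero, zero_add, ite_self] at h
            rcases mul_eq_zero.mp h with h' | h'
            · exact absurd h' (ha _)
            · exact h'
          · exact hAout (N+1) j' (Or.inr (by omega))
        · exact hAout (N+1) j' (Or.inl (by omega))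
      have step2 : ∀ i', Aq i' (N+1) = 0 := by
        intro i'
        by_cases hiN : i' ≤ N
        · exact ihN i' (N+1) (Or.inl hiN)
        by_cases hjk : N+1 < k
        · by_cases hik : i' < k
          · have hB : Bq i' N = 0 := by
              have h := ColC i' hik N (by omega)
              rw [ihN i' N (Or.inr le_rfl), ihN (i'+1) N (Or.inr le_rfl),
                ihN (i'-1) N (Or.inr le_rfl)] at h
              simpa using h
            have h := RowC i' hik N (by omega)
            rw [if_pos hjk, ihN i' N (Or.inr le_rfl), ihN i' (N-1) (Or.inr (by omega)),
              hB] at h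
            simp only [mul_zero, add_zero, zero_add, ite_self] at h
            rcases mul_eq_zero.mp h with h' | h'
            · exact absurd h' (ha _)
            · exact h'
          · exact hAout i' (N+1) (Or.inl (by omega))
        · exact hAout i' (N+1) (Or.inr (by omega))
      rintro i' j' (hi' | hj')
      · rcases Nat.lt_succ_iff_lt_or_eq.mp (Nat.lt_succ_of_le hi') with h' | rfl
        · exact ihN i' j' (Or.inl (by omega))
        · exact step1 j'
      · rcases Nat.lt_succ_iff_lt_or_eq.mp (Nat.lt_succ_of_le hj') with h' | rfl
        · exact ihN i' j' (Or.inr (by omega))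
        · exact step2 i'
  have hA : ∀ i' j', Aq i' j' = 0 := fun i' j' => Avan i' i' j' (Or.inl le_rfl)
  have hB : ∀ i' (hi' : i' < k), ∀ j' (hj' : j' < k), Bq i' j' = 0 := by
    intro i' hi' j' hj'
    have h := RowC i' hi' j' hj'
    rw [hA i' (j'+1), hA i' j', hA i' (j'-1)] at h
    simpa using h
  have hD0 : Dm i j = 0 := by
    rw [hDrep i j, hA, hB i i.isLt j j.isLt]
    simp
  simp only [hDm] at hD0
  exact (sub_eq_zero.mp hD0).symm
end
end

section
/- Explicit form of pencils in the double ansatz space: let P(λ) be a regular or singular n×n matrix polynomial of degree k ≥ 2 and suppose ℒ(λ) ∈ 𝔻𝕄(P) = 𝕄₁(P) ∩ 𝕄₂(P) is written both as ℒ(λ) = [v⊗I_n, B₁] · F_Φ^P(λ) with v ∈ ℝ^k, B₁ ∈ ℝ^{kn×(k−1)n}, and as ℒ(λ) = F_Φ^P(λ)^𝓑 · [w^T⊗I_n; B₂] with w ∈ ℝ^k, B₂ ∈ ℝ^{(k−1)n×kn}. Then v = w and B₁ = B₂^𝓑. -/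
open Polynomial Matrix

noncomputable section

/-!
Write `E = [v ⊗ I_n, B₁]`, `G = [wᵀ ⊗ I_n; B₂]` and `F = F_Φ^P`. The three-term recurrence gives
`F (Φ_k ⊗ I_n) = e₁ ⊗ P`, so `L = E F` lies in `𝕄₁(P)` with ansatz vector `v` and
`L = F^𝓑 G` lies in `𝕄₂(P)` with ansatz vector `w`. Computing `(Φ_kᵀ ⊗ I_n) L (Φ_k ⊗ I_n)` both
ways gives `(∑ vᵢ φ_{k-1-i}) P = (∑ wᵢ φ_{k-1-i}) P`; as `deg φ_j = j` and `P ≠ 0`, `v = w`.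

Write `F = λ F₁ + F₀`. Given `v = w`, the coefficients of `λ` in `E F = F^𝓑 G` show that
`K = E - G^𝓑` has zero first block row and is block skew-symmetric, `K^𝓑 = -K`. In each block
product occurring in `E F₀` and `F₀^𝓑 G` one factor is a scalar matrix, so block transposition
reverses these products, and the constant coefficients give `K F₀ = F₀^𝓑 K`. Since `F₀` is block
upper Hessenberg with subdiagonal blocks `-α_j I_n`, block row `i` of this identity determines
block row `i + 1` of `K`. Hence `K = 0`, which is `B₁ = B₂^𝓑`.
-/

section BlockTranspose

variable {R : Type*} {n k k₁ k₂ k₃ : ℕ}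

def IsScalarBlock [Zero R] (A : Matrix (Fin k₁ × Fin n) (Fin k₂ × Fin n) R) (i : Fin k₁)
    (j : Fin k₂) : Prop :=
  ∃ c : R, ∀ r s, A (i, r) (j, s) = if r = s then c else 0

lemma IsScalarBlock.map [Zero R] {S : Type*} [Zero S]
    {A : Matrix (Fin k₁ × Fin n) (Fin k₂ × Fin n) R} {i : Fin k₁} {j : Fin k₂}
    (h : IsScalarBlock A i j) (f : R → S) (hf : f 0 = 0) : IsScalarBlock (A.map f) i j := by
  obtain ⟨c, hc⟩ := h
  exact ⟨f c, fun r s => by simp only [map_apply, hc, apply_ite f, hf]⟩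

lemma isScalarBlock_blockTr [Zero R] {A : Matrix (Fin k₁ × Fin n) (Fin k₂ × Fin n) R}
    {i : Fin k₁} {j : Fin k₂} (h : IsScalarBlock A i j) : IsScalarBlock (blockTr A) j i :=
  h

@[simp]
lemma blockTr_apply (A : Matrix (Fin k₁ × Fin n) (Fin k₂ × Fin n) R) (p : Fin k₂ × Fin n)
    (q : Fin k₁ × Fin n) : blockTr A p q = A (q.1, p.2) (p.1, q.2) := rfl

lemma blockTr_blockTr (A : Matrix (Fin k₁ × Fin n) (Fin k₂ × Fin n) R) :
    blockTr (blockTr A) = A := rfl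

lemma blockTr_sub [Sub R] (A B : Matrix (Fin k₁ × Fin n) (Fin k₂ × Fin n) R) :
    blockTr (A - B) = blockTr A - blockTr B := rfl

lemma blockTr_map {S : Type*} (A : Matrix (Fin k₁ × Fin n) (Fin k₂ × Fin n) R) (f : R → S) :
    blockTr (A.map f) = (blockTr A).map f := rfl

lemma blockTr_mul_of_isScalarBlock [CommSemiring R]
    (A : Matrix (Fin k₁ × Fin n) (Fin k₂ × Fin n) R)
    (B : Matrix (Fin k₂ × Fin n) (Fin k₃ × Fin n) R)
    (h : ∀ i p j, IsScalarBlock A i p ∨ IsScalarBlock B p j) :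
    blockTr (A * B) = blockTr B * blockTr A := by
  ext ⟨i, r⟩ ⟨j, t⟩
  simp only [blockTr_apply, mul_apply, Fintype.sum_prod_type]
  refine Finset.sum_congr rfl fun p _ => ?_
  rcases h j p i with ⟨c, hc⟩ | ⟨c, hc⟩ <;> simp [hc, mul_comm]

lemma sub_blockTr_mul_eq_blockTr_mul_sub_blockTr [CommRing R]
    {E G F : Matrix (Fin k × Fin n) (Fin k × Fin n) R} (h : E * F = blockTr F * G)
    (hE : blockTr (E * F) = blockTr F * blockTr E) (hG : blockTr (blockTr F * G) = blockTr G * F)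
    (hanti : blockTr (E - blockTr G) = -(E - blockTr G)) :
    (E - blockTr G) * F = blockTr F * (E - blockTr G) := by
  rw [blockTr_sub, blockTr_blockTr] at hanti
  calc (E - blockTr G) * F = blockTr F * G - blockTr (blockTr F * G) := by rw [sub_mul, h, hG]
    _ = blockTr F * G - blockTr F * blockTr E := by rw [← h, hE]
    _ = blockTr F * (E - blockTr G) := by rw [← neg_neg (E - blockTr G), ← hanti, neg_sub, mul_sub]

lemma eq_zero_of_mul_eq_blockTr_mul [CommRing R] [NoZeroDivisors R]
    {F K : Matrix (Fin k × Fin n) (Fin k × Fin n) R}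
    (hF : ∀ p q : Fin k, q.val + 1 < p.val → ∀ r s, F (p, r) (q, s) = 0)
    (hsub : ∀ p q : Fin k, q.val + 1 = p.val → ∃ c ≠ 0, ∀ r s,
      F (p, r) (q, s) = if r = s then c else 0)
    (hK : K * F = blockTr F * K) (hK0 : ∀ p : Fin k, p.val = 0 → ∀ r y, K (p, r) y = 0) :
    K = 0 := by
  suffices h : ∀ i, ∀ p : Fin k, p.val ≤ i → ∀ r y, K (p, r) y = 0 by
    ext ⟨p, r⟩ y
    exact h p p le_rfl r y
  intro i
  induction i with
  | zero => exact fun p hp => hK0 p (Nat.le_zero.mp hp)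
  | succ i ih =>
    intro p hp r y
    rcases Nat.lt_or_ge p.val (i + 1) with hlt | hge
    · exact ih p (by omega) r y
    obtain ⟨c, hc, hcF⟩ := hsub p ⟨i, by omega⟩ (by dsimp only; omega)
    have hrow := congrFun (congrFun hK (⟨i, by omega⟩, r)) y
    rw [mul_apply, Finset.sum_eq_zero (fun x _ => by rw [ih _ le_rfl r x, zero_mul]),
      mul_apply, Finset.sum_eq_single (p, r)] at hrow
    · simp only [blockTr_apply, hcF, if_true] at hrow
      exact (mul_eq_zero.mp hrow.symm).resolve_left hc
    · rintro ⟨p', r'⟩ _ hne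
      rw [blockTr_apply]
      rcases lt_trichotomy p'.val (i + 1) with hp' | hp' | hp'
      · rw [ih p' (by omega), mul_zero]
      · obtain rfl : p' = p := Fin.ext (by omega)
        rw [hcF, if_neg (fun h => hne (Prod.ext rfl h.symm)), zero_mul]
      · rw [hF p' ⟨i, by omega⟩ (by dsimp only; omega), zero_mul]
    · simp

end BlockTranspose

section MapCoeff

variable {l m o : Type*} [Fintype m]

lemma map_coeff_liftC_mul (A : Matrix l m ℝ) (F : Matrix m o ℝ[X]) (i : ℕ) :
    (liftC A * F).map (·.coeff i) = A * F.map (·.coeff i) := by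
  ext; simp [liftC, mul_apply, coeff_C_mul]

lemma map_coeff_mul_liftC (F : Matrix l m ℝ[X]) (A : Matrix m o ℝ) (i : ℕ) :
    (F * liftC A).map (·.coeff i) = F.map (·.coeff i) * A := by
  ext; simp [liftC, mul_apply, coeff_mul_C]

end MapCoeff

section ThreeTerm

variable {a b c : ℕ → ℝ} {φ : ℕ → ℝ[X]}

lemma degree_eq_of_threeTerm (ha : ∀ j, a j ≠ 0) (hφ0 : φ 0 = 1)
    (hφ1 : C (a 0) * φ 1 = (X - C (b 0)) * φ 0)
    (hφrec : ∀ j, C (a (j + 1)) * φ (j + 2) =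
      (X - C (b (j + 1))) * φ (j + 1) - C (c (j + 1)) * φ j) (j : ℕ) :
    (φ j).degree = j := by
  induction j using Nat.strong_induction_on with
  | _ j ih =>
    match j, ih with
    | 0, _ => simp [hφ0]
    | 1, _ =>
      have := congrArg degree hφ1
      rwa [degree_C_mul (ha 0), hφ0, mul_one, degree_X_sub_C] at this
    | j + 2, ih =>
      have hlead : ((X - C (b (j + 1))) * φ (j + 1)).degree = ((j + 2 : ℕ) : WithBot ℕ) := by
        rw [degree_mul, degree_X_sub_C, ih (j + 1) (by omega)]; norm_cast; ring
      have hlow : (C (c (j + 1)) * φ j).degree < ((j + 2 : ℕ) : WithBot ℕ) := by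
        rw [← smul_eq_C_mul]
        exact (degree_smul_le _ _).trans_lt (by rw [ih j (by omega)]; norm_cast; omega)
      have := congrArg degree (hφrec j)
      rwa [degree_C_mul (ha _), degree_sub_eq_left_of_degree_lt (hlead ▸ hlow), hlead] at this

lemma linearIndependent_of_threeTerm (ha : ∀ j, a j ≠ 0) (hφ0 : φ 0 = 1)
    (hφ1 : C (a 0) * φ 1 = (X - C (b 0)) * φ 0)
    (hφrec : ∀ j, C (a (j + 1)) * φ (j + 2) =
      (X - C (b (j + 1))) * φ (j + 1) - C (c (j + 1)) * φ j) :
    LinearIndependent ℝ φ :=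
  (⟨φ, degree_eq_of_threeTerm ha hφ0 hφ1 hφrec⟩ : Polynomial.Sequence ℝ).linearIndependent

lemma sum_threeTerm_mul_eq_zero {k : ℕ} (hφ1 : C (a 0) * φ 1 = (X - C (b 0)) * φ 0)
    (hφrec : ∀ j, C (a (j + 1)) * φ (j + 2) =
      (X - C (b (j + 1))) * φ (j + 1) - C (c (j + 1)) * φ j)
    (i : ℕ) (hi : 1 ≤ i) (hik : i < k) :
    ∑ q : Fin k, (if q.val + 1 = i then -C (a (k - 1 - i))
      else if q.val = i then X - C (b (k - 1 - i))
      else if q.val = i + 1 then -C (c (k - 1 - i)) else 0) * φ (k - 1 - q) = 0 := by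
  rw [Fin.sum_univ_eq_sum_range (fun q => (if q + 1 = i then -C (a (k - 1 - i))
      else if q = i then X - C (b (k - 1 - i))
      else if q = i + 1 then -C (c (k - 1 - i)) else 0) * φ (k - 1 - q))]
  have hsplit : ∀ q, (if q + 1 = i then -C (a (k - 1 - i))
      else if q = i then X - C (b (k - 1 - i))
      else if q = i + 1 then -C (c (k - 1 - i)) else 0) * φ (k - 1 - q) =
      (if q = i - 1 then -C (a (k - 1 - i)) * φ (k - 1 - q) else 0) +
      (if q = i then (X - C (b (k - 1 - i))) * φ (k - 1 - q) else 0) +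
      (if q = i + 1 then -C (c (k - 1 - i)) * φ (k - 1 - q) else 0) := by
    intro q
    split_ifs <;> first | ring1 | (exfalso; omega)
  simp only [hsplit, Finset.sum_add_distrib, Finset.sum_ite_eq', Finset.mem_range]
  obtain ⟨j, hj⟩ : ∃ j, k - 1 - i = j := ⟨_, rfl⟩
  rw [if_pos (by omega), if_pos hik, show k - 1 - (i - 1) = j + 1 by omega, hj]
  rcases j with _ | j
  · rw [if_neg (by omega)]
    linear_combination -hφ1
  · rw [if_pos (by omega), show k - 1 - (i + 1) = j by omega]
    linear_combination -hφrec j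

end ThreeTerm

section Ansatz

variable {n k : ℕ} {a b c : ℕ → ℝ} {Pm : ℕ → Matrix (Fin n) (Fin n) ℝ} {φ : ℕ → ℝ[X]}

lemma matP_ne_zero (hφ : LinearIndependent ℝ φ) (hPk : Pm k ≠ 0) : matP n k φ Pm ≠ 0 := by
  obtain ⟨r, s, hrs⟩ : ∃ r s, Pm k r s ≠ 0 := by
    by_contra! h
    exact hPk (Matrix.ext h)
  intro hP
  have hsum : ∑ i ∈ Finset.range (k + 1), Pm i r s • φ i = 0 := by
    simpa [matP, smul_eq_C_mul] using congrFun (congrFun hP r) s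
  exact hrs (linearIndependent_iff'.mp hφ _ _ hsum k (by simp))

lemma mul_PhiMat_apply {ι : Type*} (A : Matrix ι (Fin k × Fin n) ℝ[X]) (x : ι) (s : Fin n) :
    (A * PhiMat n k φ) x s = ∑ q : Fin k, A x (q, s) * φ (k - 1 - q) := by
  simp [mul_apply, Fintype.sum_prod_type, PhiMat]

lemma PhiMat_transpose_mul_blockTr_apply (A : Matrix (Fin k × Fin n) (Fin k × Fin n) ℝ[X])
    (s : Fin n) (j : Fin k) (t : Fin n) :
    ((PhiMat n k φ)ᵀ * blockTr A) s (j, t) = (A * PhiMat n k φ) (j, s) t := by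
  simp [mul_apply, Fintype.sum_prod_type, PhiMat, mul_comm]

lemma eq_of_ansatz1_of_ansatz2 (hφ : LinearIndependent ℝ φ) (hP : matP n k φ Pm ≠ 0)
    {L : Matrix (Fin k × Fin n) (Fin k × Fin n) ℝ[X]} {v w : Fin k → ℝ}
    (h1 : Ansatz1 n k φ Pm L v) (h2 : Ansatz2 n k φ Pm L w) : v = w := by
  have key : (PhiMat n k φ)ᵀ * vKron n k v (matP n k φ Pm) =
      vKronRow n k w (matP n k φ Pm) * PhiMat n k φ := by
    rw [← h1, ← h2, Matrix.mul_assoc]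
  obtain ⟨r, s, hrs⟩ : ∃ r s, matP n k φ Pm r s ≠ 0 := by
    by_contra! h
    exact hP (Matrix.ext h)
  have hcomb : ∑ p : Fin k, C (v p) * φ (k - 1 - p) = ∑ p : Fin k, C (w p) * φ (k - 1 - p) := by
    have hentry := congrFun (congrFun key r) s
    simp only [mul_apply, Fintype.sum_prod_type, PhiMat, vKron, vKronRow, transpose_apply,
      of_apply, ite_mul, mul_ite, zero_mul, mul_zero, Finset.sum_ite_eq',
      Finset.mem_univ, if_true] at hentry
    refine mul_right_cancel₀ hrs ?_
    rw [Finset.sum_mul, Finset.sum_mul]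
    exact (Finset.sum_congr rfl fun p _ => by ring).trans
      (hentry.trans (Finset.sum_congr rfl fun p _ => by ring))
  have hind : LinearIndependent ℝ fun p : Fin k => φ (k - 1 - p) :=
    hφ.comp _ fun p q h => Fin.ext (by omega)
  funext p
  refine sub_eq_zero.mp (Fintype.linearIndependent_iff.mp hind (v - w) ?_ p)
  simp [sub_smul, Finset.sum_sub_distrib, smul_eq_C_mul, hcomb]

lemma FPhi_mul_PhiMat_apply (hk : 2 ≤ k) (hak : a (k - 1) ≠ 0)
    (hφ1 : C (a 0) * φ 1 = (X - C (b 0)) * φ 0)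
    (hφrec : ∀ j, C (a (j + 1)) * φ (j + 2) =
      (X - C (b (j + 1))) * φ (j + 1) - C (c (j + 1)) * φ j)
    (i : Fin k) (r s : Fin n) :
    (FPhi n k a b c Pm * PhiMat n k φ) (i, r) s =
      if i.val = 0 then matP n k φ Pm r s else 0 := by
  rw [mul_PhiMat_apply]
  by_cases hi : i.val = 0
  · obtain ⟨k, rfl⟩ : ∃ k', k = k' + 2 := ⟨k - 2, by omega⟩
    simp only [FPhi, of_apply, hi, if_true, Fin.sum_univ_succ, Fin.val_zero, Fin.val_succ]
    simp only [show k + 2 - 1 = k + 1 by omega, show k + 2 - 2 = k by omega,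
      show k + 1 - 1 = k by omega, show ∀ q, k + 1 - (q + 1 + 1) = k - 1 - q by omega,
      show ∀ q : ℕ, ¬ q + 1 + 1 = 0 by omega, show ∀ q : ℕ, ¬ q + 1 + 1 = 1 by omega,
      if_false, zero_add, one_ne_zero, Nat.sub_zero]
    rw [Fin.sum_univ_eq_sum_range (fun q => C (Pm (k - 1 - q) r s) * φ (k - 1 - q)),
      Finset.sum_range_reflect (fun q => C (Pm q r s) * φ q)]
    have hinv : C (a (k + 1))⁻¹ * C (a (k + 1)) = 1 := by
      rw [← C_mul, inv_mul_cancel₀ (by simpa using hak), C_1]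
    simp only [matP, of_apply, Finset.sum_range_succ, div_eq_mul_inv, C_mul]
    linear_combination (-C (Pm (k + 2) r s) * C (a (k + 1))⁻¹) * hφrec k
      + C (Pm (k + 2) r s) * φ (k + 2) * hinv
  · simp only [FPhi, of_apply, if_neg hi]
    simp_rw [mul_comm _ (ite (r = s) (1 : ℝ[X]) 0), mul_assoc, ← Finset.mul_sum,
      sum_threeTerm_mul_eq_zero hφ1 hφrec i.val (by omega) i.isLt, mul_zero]

lemma ansatz1_liftC_extCols_mul_FPhi (hk : 2 ≤ k) (hak : a (k - 1) ≠ 0)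
    (hφ1 : C (a 0) * φ 1 = (X - C (b 0)) * φ 0)
    (hφrec : ∀ j, C (a (j + 1)) * φ (j + 2) =
      (X - C (b (j + 1))) * φ (j + 1) - C (c (j + 1)) * φ j)
    (v : Fin k → ℝ) (B : Matrix (Fin k × Fin n) (Fin (k - 1) × Fin n) ℝ) :
    Ansatz1 n k φ Pm (liftC (extCols n k v B) * FPhi n k a b c Pm) v := by
  ext ⟨i, r⟩ s
  rw [Matrix.mul_assoc, mul_apply, Fintype.sum_prod_type,
    Finset.sum_eq_single (⟨0, by omega⟩ : Fin k)]
  · simp [FPhi_mul_PhiMat_apply hk hak hφ1 hφrec, liftC, extCols, vKron]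
  · intro p _ hp
    have : p.val ≠ 0 := fun h => hp (Fin.ext h)
    simp [FPhi_mul_PhiMat_apply hk hak hφ1 hφrec, this]
  · simp

lemma ansatz2_blockTr_FPhi_mul_liftC_extRows (hk : 2 ≤ k) (hak : a (k - 1) ≠ 0)
    (hφ1 : C (a 0) * φ 1 = (X - C (b 0)) * φ 0)
    (hφrec : ∀ j, C (a (j + 1)) * φ (j + 2) =
      (X - C (b (j + 1))) * φ (j + 1) - C (c (j + 1)) * φ j)
    (w : Fin k → ℝ) (B : Matrix (Fin (k - 1) × Fin n) (Fin k × Fin n) ℝ) :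
    Ansatz2 n k φ Pm (blockTr (FPhi n k a b c Pm) * liftC (extRows n k w B)) w := by
  ext s ⟨j, t⟩
  rw [← Matrix.mul_assoc, mul_apply, Fintype.sum_prod_type,
    Finset.sum_eq_single (⟨0, by omega⟩ : Fin k)]
  · simp [PhiMat_transpose_mul_blockTr_apply, FPhi_mul_PhiMat_apply hk hak hφ1 hφrec, liftC,
      extRows, vKronRow, mul_comm]
  · intro p _ hp
    have : p.val ≠ 0 := fun h => hp (Fin.ext h)
    simp [PhiMat_transpose_mul_blockTr_apply, FPhi_mul_PhiMat_apply hk hak hφ1 hφrec, this]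
  · simp

end Ansatz

section AnchorPencil

variable {n k : ℕ} {a b c : ℕ → ℝ} {Pm : ℕ → Matrix (Fin n) (Fin n) ℝ}

lemma coeff_zero_FPhi_of_lt {p q : Fin k} (h : q.val + 1 < p.val) (r s : Fin n) :
    (FPhi n k a b c Pm (p, r) (q, s)).coeff 0 = 0 := by
  simp [FPhi, show p.val ≠ 0 by omega, show q.val + 1 ≠ p.val by omega,
    show q.val ≠ p.val by omega, show q.val ≠ p.val + 1 by omega]

lemma coeff_zero_FPhi_of_succ_eq {p q : Fin k} (h : q.val + 1 = p.val) (r s : Fin n) :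
    (FPhi n k a b c Pm (p, r) (q, s)).coeff 0 = if r = s then -a (k - 1 - p.val) else 0 := by
  simp [FPhi, show p.val ≠ 0 by omega, h, apply_ite (coeff · 0)]

lemma isScalarBlock_FPhi {p : Fin k} (hp : p.val ≠ 0) (q : Fin k) :
    IsScalarBlock (FPhi n k a b c Pm) p q :=
  ⟨_, fun r s => by simp only [FPhi, of_apply, if_neg hp, mul_ite, mul_one, mul_zero]; rfl⟩

lemma coeff_one_FPhi (p q : Fin k) (r s : Fin n) :
    (FPhi n k a b c Pm (p, r) (q, s)).coeff 1 =
      if p = q then (if p.val = 0 then (a (k - 1))⁻¹ * Pm k r s else if r = s then 1 else 0)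
      else 0 := by
  unfold FPhi
  simp only [of_apply, Fin.ext_iff]
  split_ifs <;> first | (exfalso; omega) | simp [mul_comm]

lemma extCols_apply_of_val_eq_zero (v : Fin k → ℝ)
    (B : Matrix (Fin k × Fin n) (Fin (k - 1) × Fin n) ℝ) (i : Fin k) {j : Fin k}
    (hj : j.val = 0) (r s : Fin n) :
    extCols n k v B (i, r) (j, s) = if r = s then v i else 0 :=
  dif_pos hj

lemma extRows_apply_of_val_eq_zero (w : Fin k → ℝ)
    (B : Matrix (Fin (k - 1) × Fin n) (Fin k × Fin n) ℝ) {i : Fin k} (hi : i.val = 0)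
    (j : Fin k) (r s : Fin n) :
    extRows n k w B (i, r) (j, s) = if r = s then w j else 0 :=
  dif_pos hi

lemma extCols_apply_succ (v : Fin k → ℝ) (B : Matrix (Fin k × Fin n) (Fin (k - 1) × Fin n) ℝ)
    (i : Fin k) (m : Fin (k - 1)) (r t : Fin n) :
    extCols n k v B (i, r) (⟨m.val + 1, by omega⟩, t) = B (i, r) (m, t) := by
  simp [extCols]

lemma extRows_apply_succ (w : Fin k → ℝ) (B : Matrix (Fin (k - 1) × Fin n) (Fin k × Fin n) ℝ)
    (m : Fin (k - 1)) (j : Fin k) (r t : Fin n) :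
    extRows n k w B (⟨m.val + 1, by omega⟩, r) (j, t) = B (m, r) (j, t) := by
  simp [extRows]

lemma mul_map_coeff_one_FPhi_apply {ι : Type*} (A : Matrix ι (Fin k × Fin n) ℝ) (x : ι)
    (j : Fin k) (t : Fin n) :
    (A * (FPhi n k a b c Pm).map (·.coeff 1)) x (j, t) =
      if j.val = 0 then ∑ s, A x (j, s) * ((a (k - 1))⁻¹ * Pm k s t) else A x (j, t) := by
  rw [mul_apply, Fintype.sum_prod_type, Finset.sum_eq_single j]
  · split_ifs <;> simp [coeff_one_FPhi, *]
  · intro p _ hp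
    simp [coeff_one_FPhi, hp]
  · simp

lemma blockTr_map_coeff_one_FPhi_mul_apply {κ : Type*} (A : Matrix (Fin k × Fin n) κ ℝ)
    (i : Fin k) (r : Fin n) (y : κ) :
    (blockTr ((FPhi n k a b c Pm).map (·.coeff 1)) * A) (i, r) y =
      if i.val = 0 then ∑ s, (a (k - 1))⁻¹ * Pm k r s * A (i, s) y else A (i, r) y := by
  rw [mul_apply, Fintype.sum_prod_type, Finset.sum_eq_single i]
  · split_ifs <;> simp [coeff_one_FPhi, *]
  · intro p _ hp
    simp [coeff_one_FPhi, hp]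
  · simp

variable {v w : Fin k → ℝ} {B₁ : Matrix (Fin k × Fin n) (Fin (k - 1) × Fin n) ℝ}
  {B₂ : Matrix (Fin (k - 1) × Fin n) (Fin k × Fin n) ℝ}

lemma extCols_eq_extRows_of_coeff_one
    (h1 : extCols n k v B₁ * (FPhi n k a b c Pm).map (·.coeff 1) =
      blockTr ((FPhi n k a b c Pm).map (·.coeff 1)) * extRows n k w B₂)
    (i j : Fin k) (r t : Fin n) :
    (if j.val = 0 then v i * ((a (k - 1))⁻¹ * Pm k r t) else extCols n k v B₁ (i, r) (j, t)) =
      if i.val = 0 then (a (k - 1))⁻¹ * Pm k r t * w j else extRows n k w B₂ (i, r) (j, t) := by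
  have h := congrFun (congrFun h1 (i, r)) (j, t)
  rw [mul_map_coeff_one_FPhi_apply, blockTr_map_coeff_one_FPhi_mul_apply] at h
  convert h using 2
  · simp [extCols_apply_of_val_eq_zero, *]
  · simp [extRows_apply_of_val_eq_zero, *]

lemma extCols_sub_blockTr_extRows_apply_eq_zero
    (h1 : extCols n k v B₁ * (FPhi n k a b c Pm).map (·.coeff 1) =
      blockTr ((FPhi n k a b c Pm).map (·.coeff 1)) * extRows n k v B₂)
    {i j : Fin k} (hij : i.val = 0 ∨ j.val = 0) (r t : Fin n) :
    (extCols n k v B₁ - blockTr (extRows n k v B₂)) (i, r) (j, t) = 0 := by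
  rw [Matrix.sub_apply, sub_eq_zero]
  by_cases hj : j.val = 0
  · exact (extCols_apply_of_val_eq_zero v B₁ i hj r t).trans
      (extRows_apply_of_val_eq_zero v B₂ hj i r t).symm
  have hi : i.val = 0 := hij.resolve_right hj
  have hij' := extCols_eq_extRows_of_coeff_one h1 i j r t
  have hji' := extCols_eq_extRows_of_coeff_one h1 j i r t
  rw [if_neg hj, if_pos hi] at hij'
  rw [if_pos hi, if_neg hj] at hji'
  rw [hij', mul_comm, hji', blockTr_apply]

lemma blockTr_extCols_sub_blockTr_extRows
    (h1 : extCols n k v B₁ * (FPhi n k a b c Pm).map (·.coeff 1) =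
      blockTr ((FPhi n k a b c Pm).map (·.coeff 1)) * extRows n k v B₂) :
    blockTr (extCols n k v B₁ - blockTr (extRows n k v B₂)) =
      -(extCols n k v B₁ - blockTr (extRows n k v B₂)) := by
  ext ⟨i, r⟩ ⟨j, t⟩
  by_cases hij : i.val = 0 ∨ j.val = 0
  · rw [blockTr_apply, Matrix.neg_apply, extCols_sub_blockTr_extRows_apply_eq_zero h1 hij,
      extCols_sub_blockTr_extRows_apply_eq_zero h1 hij.symm, neg_zero]
  rw [not_or] at hij
  have hij' := extCols_eq_extRows_of_coeff_one h1 i j r t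
  have hji' := extCols_eq_extRows_of_coeff_one h1 j i r t
  rw [if_neg hij.2, if_neg hij.1] at hij'
  rw [if_neg hij.1, if_neg hij.2] at hji'
  simp only [blockTr_apply, Matrix.sub_apply, Matrix.neg_apply, hij', hji']
  ring

lemma extCols_sub_blockTr_extRows_mul_coeff_zero
    (h0 : extCols n k v B₁ * (FPhi n k a b c Pm).map (·.coeff 0) =
      blockTr ((FPhi n k a b c Pm).map (·.coeff 0)) * extRows n k v B₂)
    (h1 : extCols n k v B₁ * (FPhi n k a b c Pm).map (·.coeff 1) =
      blockTr ((FPhi n k a b c Pm).map (·.coeff 1)) * extRows n k v B₂) :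
    (extCols n k v B₁ - blockTr (extRows n k v B₂)) * (FPhi n k a b c Pm).map (·.coeff 0) =
      blockTr ((FPhi n k a b c Pm).map (·.coeff 0)) *
        (extCols n k v B₁ - blockTr (extRows n k v B₂)) :=
  sub_blockTr_mul_eq_blockTr_mul_sub_blockTr h0
    (blockTr_mul_of_isScalarBlock _ _ fun i p j =>
      if hp : p.val = 0 then Or.inl ⟨v i, extCols_apply_of_val_eq_zero v B₁ i hp⟩
      else Or.inr ((isScalarBlock_FPhi hp j).map _ (coeff_zero 0)))
    (blockTr_mul_of_isScalarBlock _ _ fun i p j =>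
      if hp : p.val = 0 then Or.inr ⟨v j, extRows_apply_of_val_eq_zero v B₂ hp j⟩
      else Or.inl (isScalarBlock_blockTr ((isScalarBlock_FPhi hp i).map _ (coeff_zero 0))))
    (blockTr_extCols_sub_blockTr_extRows h1)

end AnchorPencil

theorem statement_14_general
    (n k : ℕ) (hk : 2 ≤ k)
    (a b c : ℕ → ℝ) (ha : ∀ j, a j ≠ 0)
    (φ : ℕ → Polynomial ℝ) (hφ0 : φ 0 = 1)
    (hφ1 : C (a 0) * φ 1 = (X - C (b 0)) * φ 0)
    (hφrec : ∀ j, C (a (j + 1)) * φ (j + 2) =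
      (X - C (b (j + 1))) * φ (j + 1) - C (c (j + 1)) * φ j)
    (Pm : ℕ → Matrix (Fin n) (Fin n) ℝ) (hPk : Pm k ≠ 0)
    (v w : Fin k → ℝ) (B₁ : Matrix (Fin k × Fin n) (Fin (k - 1) × Fin n) ℝ)
    (B₂ : Matrix (Fin (k - 1) × Fin n) (Fin k × Fin n) ℝ)
    (heq : liftC (extCols n k v B₁) * FPhi n k a b c Pm =
      blockTr (FPhi n k a b c Pm) * liftC (extRows n k w B₂)) :
    v = w ∧ B₁ = blockTr B₂ := by
  have hφ := linearIndependent_of_threeTerm ha hφ0 hφ1 hφrec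
  have h2 := ansatz2_blockTr_FPhi_mul_liftC_extRows (Pm := Pm) hk (ha _) hφ1 hφrec w B₂
  rw [← heq] at h2
  obtain rfl : v = w := eq_of_ansatz1_of_ansatz2 hφ (matP_ne_zero hφ hPk)
    (ansatz1_liftC_extCols_mul_FPhi hk (ha _) hφ1 hφrec v B₁) h2
  have hcoeff (m : ℕ) : extCols n k v B₁ * (FPhi n k a b c Pm).map (·.coeff m) =
      blockTr ((FPhi n k a b c Pm).map (·.coeff m)) * extRows n k v B₂ := by
    simpa only [map_coeff_liftC_mul, map_coeff_mul_liftC, blockTr_map] using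
      congrArg (·.map (·.coeff m)) heq
  have hK := eq_zero_of_mul_eq_blockTr_mul
    (fun p q h r s => coeff_zero_FPhi_of_lt h r s)
    (fun p q h => ⟨-a (k - 1 - p.val), neg_ne_zero.mpr (ha _), coeff_zero_FPhi_of_succ_eq h⟩)
    (extCols_sub_blockTr_extRows_mul_coeff_zero (hcoeff 0) (hcoeff 1))
    (fun p hp r y => extCols_sub_blockTr_extRows_apply_eq_zero (hcoeff 1) (Or.inl hp) r y.2)
  refine ⟨rfl, ?_⟩
  ext ⟨i, r⟩ ⟨m, t⟩
  have hentry := congrFun (congrFun hK (i, r)) (⟨m.val + 1, by omega⟩, t)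
  rwa [Matrix.sub_apply, blockTr_apply, extCols_apply_succ, extRows_apply_succ,
    Matrix.zero_apply, sub_eq_zero] at hentry

theorem statement_14
    (n k : ℕ) (hn : 0 < n) (hk : 2 ≤ k)
    (a b c : ℕ → ℝ) (ha : ∀ j, a j ≠ 0)
    (φ : ℕ → Polynomial ℝ) (hφ0 : φ 0 = 1)
    (hφ1 : C (a 0) * φ 1 = (X - C (b 0)) * φ 0)
    (hφrec : ∀ j, C (a (j + 1)) * φ (j + 2) =
      (X - C (b (j + 1))) * φ (j + 1) - C (c (j + 1)) * φ j)
    (Pm : ℕ → Matrix (Fin n) (Fin n) ℝ) (hPk : Pm k ≠ 0)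
    (v w : Fin k → ℝ) (B₁ : Matrix (Fin k × Fin n) (Fin (k - 1) × Fin n) ℝ)
    (B₂ : Matrix (Fin (k - 1) × Fin n) (Fin k × Fin n) ℝ)
    (heq : liftC (extCols n k v B₁) * FPhi n k a b c Pm =
      blockTr (FPhi n k a b c Pm) * liftC (extRows n k w B₂)) :
    v = w ∧ B₁ = blockTr B₂ :=
  statement_14_general n k hk a b c ha φ hφ0 hφ1 hφrec Pm hPk v w B₁ B₂ heq
end
end
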